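/- arXiv:1801.09764 — 5 statements merged into one kernel-verified Lean document; each statement's English description precedes it below -/
import Mathlib

section
/- Let A be a semi-prime, regular, commutative complex Banach algebra and let T be a multiplier on A (a map T : A → A with u(Tv) = (Tu)v for all u, v ∈ A). Then the descent spectrum of T coincides with its essential descent spectrum: σ_desc(T) = σ_desc^e(T). -/
noncomputable section

variable {X : Type*} [NormedAddCommGroup X] [NormedSpace ℂ X]

/-- `T - λ·I`. -/
def shiftOp (T : X →L[ℂ] X) (l : ℂ) : X →L[ℂ] X := T - l • (1 : X →L[ℂ] X)

/-- The descent spectrum: the set of `λ` such that no `q` satisfies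
`R((T-λ)^q) = R((T-λ)^{q+1})`, i.e. the descent of `T - λ` is infinite. -/
def descentSpectrum (T : X →L[ℂ] X) : Set ℂ :=
  {l | ∀ q : ℕ, LinearMap.range (((shiftOp T l) ^ q : X →L[ℂ] X) : X →ₗ[ℂ] X) ≠ LinearMap.range (((shiftOp T l) ^ (q + 1) : X →L[ℂ] X) : X →ₗ[ℂ] X)}

/-- The quotient space `R(S^n) / R(S^{n+1})`. -/
abbrev rangeQuot (S : X →L[ℂ] X) (n : ℕ) : Type _ :=
  ↥(LinearMap.range ((S ^ n : X →L[ℂ] X) : X →ₗ[ℂ] X)) ⧸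
    (Submodule.comap (LinearMap.range ((S ^ n : X →L[ℂ] X) : X →ₗ[ℂ] X)).subtype (LinearMap.range ((S ^ (n + 1) : X →L[ℂ] X) : X →ₗ[ℂ] X)))

/-- The essential descent spectrum: the set of `λ` such that `c_n(T-λ) =
dim R((T-λ)^n)/R((T-λ)^{n+1})` is infinite for every `n`, i.e. `d_e(T-λ) = ∞`. -/
def essDescentSpectrum (T : X →L[ℂ] X) : Set ℂ :=
  {l | ∀ n : ℕ, ¬ FiniteDimensional ℂ (rangeQuot (shiftOp T l) n)}

/-! A multiplier is multiplication by `T 1`, so `T - λ` is multiplication by `b = T 1 - λ`,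
and `R((T - λ)^n) / R((T - λ)^{n+1})` is `A / (bA + N(b^n))`. Semi-primeness makes `A`
reduced, so `N(b^n) ⊆ Ann(b)`, and a finite `c_n` makes the ideal `bA + Ann(b)` of finite
codimension. If it were proper, the open mapping theorem would give `C` with
`dist(x, Ann(b)) ≤ C^m ‖b^m x‖`, and some character `φ` would kill it. Regularity yields `u`
with `φ(u) = 1` vanishing where `|ψ(C b)| ≥ 1/2`; for large `s` the element `w = (C b)^s u`
has spectral radius `< 1`, so `‖w^k‖ → 0`, contradicting `1 = |φ(u^k)| ≤ ‖1‖ ‖w^k‖`.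
Hence `1 = b t + r` with `b r = 0`, which gives `R(b) = R(b²)`. -/

open WeakDual Filter Topology ContinuousLinearMap

namespace ContinuousLinearMap

theorem finiteDimensional_rangeQuot_of_range_pow_eq (S : X →L[ℂ] X) {q : ℕ}
    (h : LinearMap.range ((S ^ q : X →L[ℂ] X) : X →ₗ[ℂ] X) =
      LinearMap.range ((S ^ (q + 1) : X →L[ℂ] X) : X →ₗ[ℂ] X)) :
    FiniteDimensional ℂ (rangeQuot S q) := by
  have : Subsingleton (rangeQuot S q) := Submodule.Quotient.subsingleton_iff.mpr <| by
    rw [Submodule.comap_subtype_eq_top, h]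
  infer_instance

/-- Induced by `x ↦ S^n x`. -/
def quotientRangeSupKerPowEquivRangeQuot (S : X →L[ℂ] X) (n : ℕ) :
    (X ⧸ (LinearMap.range (S : X →ₗ[ℂ] X) ⊔ LinearMap.ker ((S ^ n : X →L[ℂ] X) : X →ₗ[ℂ] X)))
      ≃ₗ[ℂ] rangeQuot S n :=
  let Sn : X →ₗ[ℂ] X := (S ^ n : X →L[ℂ] X)
  let f := (Submodule.mkQ _).comp Sn.rangeRestrict
  have hf : Function.Surjective f :=
    (Submodule.mkQ_surjective _).comp (LinearMap.surjective_rangeRestrict Sn)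
  have hker : LinearMap.ker f = LinearMap.range (S : X →ₗ[ℂ] X) ⊔ LinearMap.ker Sn := by
    rw [LinearMap.ker_comp, Submodule.ker_mkQ, ← Submodule.comap_comp, ← Submodule.comap_map_eq,
      ← LinearMap.range_comp, pow_succ, toLinearMap_mul]
    rfl
  (Submodule.quotEquivOfEq _ _ hker.symm).trans (f.quotKerEquivOfSurjective hf)

theorem finiteDimensional_quotient_range_sup_ker_pow (S : X →L[ℂ] X) (n : ℕ)
    [FiniteDimensional ℂ (rangeQuot S n)] :
    FiniteDimensional ℂ
      (X ⧸ (LinearMap.range (S : X →ₗ[ℂ] X) ⊔ LinearMap.ker ((S ^ n : X →L[ℂ] X) : X →ₗ[ℂ] X))) :=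
  (S.quotientRangeSupKerPowEquivRangeQuot n).symm.finiteDimensional

end ContinuousLinearMap

theorem essDescentSpectrum_subset_descentSpectrum (T : X →L[ℂ] X) :
    essDescentSpectrum T ⊆ descentSpectrum T :=
  fun _ hl q hq => hl q ((shiftOp T _).finiteDimensional_rangeQuot_of_range_pow_eq hq)

section CommRing

variable {R : Type*} [CommRing R]

theorem isReduced_of_forall_mul_self_eq_bot (h : ∀ J : Ideal R, J * J = ⊥ → J = ⊥) :
    IsReduced R :=
  (isReduced_iff_pow_one_lt 2 one_lt_two).mpr fun x hx => by
    simpa using h (Ideal.span {x}) (by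
      rw [Ideal.span_singleton_mul_span_singleton, ← sq, hx, Ideal.span_singleton_eq_bot])

theorem mul_eq_zero_of_pow_mul_eq_zero [IsReduced R] {b y : R} (n : ℕ) (h : b ^ n * y = 0) :
    b * y = 0 :=
  eq_zero_of_pow_eq_zero (n := n + 1) <| by
    rw [show (b * y) ^ (n + 1) = b ^ n * y * (b * y ^ n) by ring, h, zero_mul]

def spanSupAnnihilator (b : R) : Ideal R :=
  Ideal.span {b} ⊔ (Ideal.span {b}).annihilator

theorem mem_spanSupAnnihilator {b x : R} :
    x ∈ spanSupAnnihilator b ↔ ∃ t r : R, b * r = 0 ∧ b * t + r = x := by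
  simp only [spanSupAnnihilator, Submodule.mem_sup, Ideal.mem_span_singleton',
    Submodule.mem_annihilator_span_singleton, smul_eq_mul]
  constructor
  · rintro ⟨_, ⟨t, rfl⟩, r, hr, rfl⟩
    exact ⟨t, r, by rw [mul_comm, hr], by rw [mul_comm]⟩
  · rintro ⟨t, r, hr, rfl⟩
    exact ⟨_, ⟨t, mul_comm t b⟩, r, by rw [mul_comm, hr], rfl⟩

end CommRing

section NormedRing

variable {R : Type*} [NormedRing R]

/-- `‖x‖ ≤ C ‖b x‖` on `R ⧸ Ann(b)`, stated with representatives. -/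
def MulBoundedBelowModAnnihilator (b : R) (C : ℝ) : Prop :=
  ∀ x κ : R, b * κ = 0 → ∃ κ', b * κ' = 0 ∧ ‖x - κ'‖ ≤ C * ‖b * x - κ‖

theorem MulBoundedBelowModAnnihilator.exists_norm_sub_le_pow {b : R} {C : ℝ}
    (h : MulBoundedBelowModAnnihilator b C) (hC : 0 ≤ C) (m : ℕ) (x : R) :
    ∃ κ, b * κ = 0 ∧ ‖x - κ‖ ≤ C ^ m * ‖b ^ m * x‖ := by
  induction m generalizing x with
  | zero => exact ⟨0, mul_zero b, by simp⟩
  | succ m ih =>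
    obtain ⟨κ, hκ, hle⟩ := ih (b * x)
    obtain ⟨κ', hκ', hle'⟩ := h x κ hκ
    refine ⟨κ', hκ', hle'.trans ?_⟩
    rw [pow_succ', mul_assoc, pow_succ, mul_assoc]
    exact mul_le_mul_of_nonneg_left hle hC

variable [NormedAlgebra ℂ R] [CompleteSpace R]

theorem tendsto_norm_pow_atTop_nhds_zero_of_spectralRadius_lt_one {a : R}
    (h : spectralRadius ℂ a < 1) : Tendsto (fun n => ‖a ^ n‖) atTop (𝓝 0) := by
  obtain ⟨r, hr0, har, hr1⟩ := ENNReal.lt_iff_exists_real_btwn.mp h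
  have hr1 : r < 1 := by simpa using hr1
  have hroot : ∀ᶠ n : ℕ in atTop, ‖a ^ n‖ ^ (1 / n : ℝ) < r := by
    filter_upwards
      [(spectrum.pow_norm_pow_one_div_tendsto_nhds_spectralRadius a).eventually_lt_const har]
      with n hn
    exact (ENNReal.ofReal_lt_ofReal_iff_of_nonneg (by positivity)).mp hn
  refine squeeze_zero' (.of_forall fun _ => norm_nonneg _) ?_
    (tendsto_pow_atTop_nhds_zero_of_lt_one hr0 hr1)
  filter_upwards [hroot, eventually_ne_atTop 0] with n hn hn0
  calc ‖a ^ n‖ = (‖a ^ n‖ ^ (1 / n : ℝ)) ^ n := by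
        rw [one_div, Real.rpow_inv_natCast_pow (norm_nonneg _) hn0]
    _ ≤ r ^ n := pow_le_pow_left₀ (by positivity) hn.le n

end NormedRing

section CommBanachAlgebra

variable {A : Type*} [NormedCommRing A] [NormedAlgebra ℂ A]

theorem ContinuousLinearMap.mul_pow_eq_mul_pow (b : A) (n : ℕ) :
    mul ℂ A b ^ n = mul ℂ A (b ^ n) := by
  induction n with
  | zero => ext; simp
  | succ n ih => ext; simp [pow_succ, ih, mul_assoc]

theorem shiftOp_eq_mul {T : A →L[ℂ] A} (hT : ∀ u v : A, u * T v = T u * v) (l : ℂ) :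
    shiftOp T l = mul ℂ A (T 1 - l • 1) := by
  ext v
  simpa [shiftOp, sub_mul] using hT 1 v

theorem finiteDimensional_quotient_spanSupAnnihilator [IsReduced A] (b : A) (n : ℕ)
    [FiniteDimensional ℂ (rangeQuot (mul ℂ A b) n)] :
    FiniteDimensional ℂ (A ⧸ (spanSupAnnihilator b).restrictScalars ℂ) := by
  have hle : LinearMap.range (mul ℂ A b : A →ₗ[ℂ] A) ⊔
      LinearMap.ker ((mul ℂ A b ^ n : A →L[ℂ] A) : A →ₗ[ℂ] A) ≤
      (spanSupAnnihilator b).restrictScalars ℂ := by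
    refine sup_le ?_ fun y hy => ?_
    · rintro _ ⟨t, rfl⟩
      exact mem_spanSupAnnihilator.mpr ⟨t, 0, mul_zero b, add_zero _⟩
    · rw [LinearMap.mem_ker, coe_coe, mul_pow_eq_mul_pow, mul_apply'] at hy
      exact mem_spanSupAnnihilator.mpr ⟨0, y, mul_eq_zero_of_pow_mul_eq_zero n hy, by simp⟩
  have := (mul ℂ A b).finiteDimensional_quotient_range_sup_ker_pow n
  exact Module.Finite.of_surjective _ (Submodule.factor_surjective hle)

theorem range_mul_eq_range_mul_sq {b : A} (h : spanSupAnnihilator b = ⊤) :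
    LinearMap.range ((mul ℂ A b ^ 1 : A →L[ℂ] A) : A →ₗ[ℂ] A) =
      LinearMap.range ((mul ℂ A b ^ (1 + 1) : A →L[ℂ] A) : A →ₗ[ℂ] A) := by
  obtain ⟨t, r, hr, htr⟩ := mem_spanSupAnnihilator.mp (h ▸ Submodule.mem_top : (1 : A) ∈ _)
  ext x
  simp only [mul_pow_eq_mul_pow, LinearMap.mem_range, coe_coe, mul_apply']
  constructor
  · rintro ⟨y, rfl⟩
    refine ⟨t * y, ?_⟩
    calc b ^ (1 + 1) * (t * y) = b * (b * t + r) * y - b * r * y := by ring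
      _ = b ^ 1 * y := by rw [htr, hr]; ring
  · rintro ⟨y, rfl⟩
    exact ⟨b * y, by ring⟩

variable [CompleteSpace A]

theorem spectralRadius_le_of_forall_norm_apply_le {a : A} {ρ : ℝ}
    (h : ∀ ψ : characterSpace ℂ A, ‖ψ a‖ ≤ ρ) : spectralRadius ℂ a ≤ ENNReal.ofReal ρ := by
  refine iSup₂_le fun z hz => ?_
  obtain ⟨ψ, rfl⟩ := CharacterSpace.mem_spectrum_iff_exists.mp hz
  rw [← enorm_eq_nnnorm, ← ofReal_norm]
  exact ENNReal.ofReal_le_ofReal (h ψ)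

theorem exists_lt_norm_apply_of_apply_eq_zero
    (hregular : ∀ F : Set (characterSpace ℂ A), IsClosed F →
      ∀ φ : characterSpace ℂ A, φ ∉ F → ∃ a : A, (∀ ψ ∈ F, ψ a = 0) ∧ φ a = 1)
    {φ : characterSpace ℂ A} {c : A} (hc : φ c = 0) (D : ℝ) :
    ∃ m x, D * ‖c ^ m * x‖ < ‖φ x‖ := by
  set F := {ψ : characterSpace ℂ A | 1 / 2 ≤ ‖ψ c‖}
  have hF : IsClosed F :=
    isClosed_le continuous_const ((eval_continuous c).comp continuous_subtype_val).norm
  obtain ⟨u, hu0, hu1⟩ := hregular F hF φ (by simp [F, hc])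
  obtain ⟨s, hs⟩ := pow_unbounded_of_one_lt (‖u‖ * ‖(1 : A)‖) one_lt_two
  have hbound (ψ : characterSpace ℂ A) :
      ‖ψ (c ^ s * u)‖ ≤ (1 / 2) ^ s * (‖u‖ * ‖(1 : A)‖) := by
    by_cases hψ : ψ ∈ F
    · rw [map_mul, hu0 ψ hψ, mul_zero, norm_zero]
      positivity
    · rw [map_mul, map_pow, norm_mul, norm_pow]
      exact mul_le_mul (pow_le_pow_left₀ (norm_nonneg _) (not_le.mp hψ).le s)
        (AlgHom.norm_apply_le_self_mul_norm_one ψ u) (norm_nonneg _) (by positivity)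
  have hrad : spectralRadius ℂ (c ^ s * u) < 1 := by
    refine (spectralRadius_le_of_forall_norm_apply_le hbound).trans_lt ?_
    rw [ENNReal.ofReal_lt_one, div_pow, one_pow, one_div_mul_eq_div, div_lt_one (by positivity)]
    exact hs
  obtain ⟨k, hk⟩ := (((tendsto_norm_pow_atTop_nhds_zero_of_spectralRadius_lt_one hrad).const_mul
    D).eventually_lt_const (by simp : D * 0 < 1)).exists
  refine ⟨s * k, u ^ k, ?_⟩
  rwa [map_pow, hu1, one_pow, norm_one, pow_mul, ← mul_pow]

variable [IsReduced A]

theorem exists_mulBoundedBelowModAnnihilator (b : A)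
    [FiniteDimensional ℂ (A ⧸ (spanSupAnnihilator b).restrictScalars ℂ)] :
    ∃ C > 0, MulBoundedBelowModAnnihilator b C := by
  set J := (spanSupAnnihilator b).restrictScalars ℂ
  obtain ⟨V, hV⟩ := J.exists_isCompl
  have : FiniteDimensional ℂ V := (J.quotientEquivOfIsCompl V hV).finiteDimensional
  set K := LinearMap.ker (mul ℂ A b : A →ₗ[ℂ] A)
  have : CompleteSpace K := (mul ℂ A b).isClosed_ker.completeSpace_coe
  let G : (A × K) × V →L[ℂ] A := ((mul ℂ A b).coprod K.subtypeL).coprod V.subtypeL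
  have hG : Function.Surjective G := by
    intro a
    obtain ⟨j, hj, v, hv, rfl⟩ :=
      Submodule.mem_sup.mp (hV.sup_eq_top ▸ Submodule.mem_top : a ∈ J ⊔ V)
    obtain ⟨t, r, hr, rfl⟩ := mem_spanSupAnnihilator.mp hj
    exact ⟨((t, ⟨r, hr⟩), ⟨v, hv⟩), rfl⟩
  obtain ⟨C, hC, hpre⟩ := G.exists_preimage_norm_le hG
  refine ⟨C, hC, fun x κ hκ => ?_⟩
  obtain ⟨⟨⟨t, ⟨r, hr⟩⟩, ⟨v, hv⟩⟩, hGy, hnorm⟩ := hpre (b * x - κ)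
  replace hr : b * r = 0 := hr
  replace hGy : b * t + r + v = b * x - κ := hGy
  have hvJ : v ∈ J := mem_spanSupAnnihilator.mpr
    ⟨x - t, -(κ + r), by rw [mul_neg, mul_add, hκ, hr, add_zero, neg_zero], by
      linear_combination -hGy⟩
  have hv0 : v = 0 := Submodule.disjoint_def.mp hV.disjoint v hvJ hv
  have hbxt : b ^ 2 * (x - t) = 0 := by
    linear_combination -b * hGy + b * hv0 + hκ + hr
  refine ⟨x - t, mul_eq_zero_of_pow_mul_eq_zero 2 hbxt, ?_⟩
  rw [sub_sub_cancel]
  exact (_root_.norm_fst_le _).trans ((_root_.norm_fst_le _).trans hnorm)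

theorem spanSupAnnihilator_eq_top
    (hregular : ∀ F : Set (characterSpace ℂ A), IsClosed F →
      ∀ φ : characterSpace ℂ A, φ ∉ F → ∃ a : A, (∀ ψ ∈ F, ψ a = 0) ∧ φ a = 1)
    (b : A) [FiniteDimensional ℂ (A ⧸ (spanSupAnnihilator b).restrictScalars ℂ)] :
    spanSupAnnihilator b = ⊤ := by
  by_contra hne
  obtain ⟨M, hM, hJM⟩ := Ideal.exists_le_maximal _ hne
  set φ := M.toCharacterSpace
  have hφ : ∀ x ∈ spanSupAnnihilator b, φ x = 0 :=
    fun x hx => M.toCharacterSpace_apply_eq_zero_of_mem (hJM hx)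
  obtain ⟨C, hC, hbdd⟩ := exists_mulBoundedBelowModAnnihilator b
  have hφc : φ ((C : ℂ) • b) = 0 := by
    rw [map_smul, hφ b (mem_spanSupAnnihilator.mpr ⟨1, 0, mul_zero b, by simp⟩), smul_zero]
  obtain ⟨m, x, hlt⟩ := exists_lt_norm_apply_of_apply_eq_zero hregular hφc ‖(1 : A)‖
  obtain ⟨κ, hκ, hle⟩ := hbdd.exists_norm_sub_le_pow hC.le m x
  have hφκ : φ κ = 0 := hφ κ (mem_spanSupAnnihilator.mpr ⟨0, κ, hκ, by simp⟩)
  refine hlt.not_ge ?_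
  calc ‖φ x‖ = ‖φ (x - κ)‖ := by rw [map_sub, hφκ, sub_zero]
    _ ≤ ‖x - κ‖ * ‖(1 : A)‖ := AlgHom.norm_apply_le_self_mul_norm_one φ _
    _ ≤ C ^ m * ‖b ^ m * x‖ * ‖(1 : A)‖ := by gcongr
    _ = ‖(1 : A)‖ * ‖((C : ℂ) • b) ^ m * x‖ := by
      rw [smul_pow, smul_mul_assoc, norm_smul, norm_pow, Complex.norm_real,
        Real.norm_of_nonneg hC.le]
      ring

end CommBanachAlgebra

/-- Let `A` be a semi-prime, regular, commutative complex Banach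
algebra (semi-prime: the only ideal `J` with `J² = 0` is `{0}`; regular: for every
closed subset `F` of the character space and every character `φ ∉ F` there is `a ∈ A`
whose Gelfand transform vanishes on `F` and equals `1` at `φ`). If `T` is a multiplier
on `A`, i.e. `u·(T v) = (T u)·v` for all `u, v`, then `σ_desc(T) = σ_desc^e(T)`. -/
theorem multiplier_descentSpectrum_eq_essDescentSpectrum
    {A : Type*} [NormedCommRing A] [NormedAlgebra ℂ A] [CompleteSpace A]
    (hsemiprime : ∀ J : Ideal A, J * J = ⊥ → J = ⊥)
    (hregular : ∀ F : Set (WeakDual.characterSpace ℂ A), IsClosed F →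
      ∀ φ : WeakDual.characterSpace ℂ A, φ ∉ F →
        ∃ a : A, (∀ ψ ∈ F, ψ a = 0) ∧ φ a = 1)
    (T : A →L[ℂ] A) (hT : ∀ u v : A, u * T v = T u * v) :
    descentSpectrum T = essDescentSpectrum T := by
  have : IsReduced A := isReduced_of_forall_mul_self_eq_bot hsemiprime
  refine (essDescentSpectrum_subset_descentSpectrum T).antisymm' fun l hl => ?_
  by_contra hess
  obtain ⟨n, hn⟩ : ∃ n, FiniteDimensional ℂ (rangeQuot (shiftOp T l) n) := by
    simpa [essDescentSpectrum] using hess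
  rw [shiftOp_eq_mul hT] at hn
  have := finiteDimensional_quotient_spanSupAnnihilator (T 1 - l • 1) n
  refine hl 1 ?_
  rw [shiftOp_eq_mul hT]
  exact range_mul_eq_range_mul_sq (spanSupAnnihilator_eq_top hregular _)
end
end

section
/- Let X be a complex Banach space and T a supercyclic bounded linear operator on X, i.e. there exists x ∈ X such that the homogeneous orbit {λ Tⁿ x : λ ∈ ℂ, n ∈ ℕ} is dense in X. Then the descent spectrum of T coincides with its essential descent spectrum: σ_desc(T) = σ_desc^e(T). -/
noncomputable section

variable {X : Type*} [NormedAddCommGroup X] [NormedSpace ℂ X]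

/-!
Only `σ_desc(T) ⊆ σ_desc^e(T)` needs an argument: if `R(Sⁿ) = R(Sⁿ⁺¹)` the quotient
`R(Sⁿ)/R(Sⁿ⁺¹)` is zero. So let `S = T - λ` have `c_n(S) < ∞` while
`R(Sⁿ) ≠ R(Sⁿ⁺¹) ≠ R(Sⁿ⁺²)`. The subspace `P = R(S²) + N(Sⁿ)` is `T`-invariant, satisfies
`P ⊊ R(S) + N(Sⁿ) ⊊ X`, and has codimension at most `2 c_n(S)` because `X/(R(S) + N(Sⁿ))`
is `R(Sⁿ)/R(Sⁿ⁺¹)` and `S` maps it onto `(R(S) + N(Sⁿ))/P`. Being the range of the bounded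
operator `(y, k) ↦ S²y + k` on `X × N(Sⁿ)`, `P` is closed by Kato's lemma (a finite-codimensional
operator range is closed, by the open mapping theorem). Hence `T` induces on the Hausdorff space
`X/P`, of dimension at least `2`, a supercyclic operator `λ + N` with `N² = 0`. This is
impossible: either every homogeneous orbit of `λ + N` lies in a line, or `λ + N` factors onto
the `2 × 2` Jordan block, whose homogeneous orbit `(c λᵏ, c k λᵏ⁻¹)` lies in a proper closed
subset of `ℂ²`.
-/

open Module Submodule

section LinearAlgebra

variable {K M N : Type*} [Field K] [AddCommGroup M] [Module K M] [AddCommGroup N] [Module K N]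

theorem Submodule.finiteDimensional_quotient_comap {g : M →ₗ[K] N} {V W : Submodule K N}
    (hg : LinearMap.range g ≤ V) [FiniteDimensional K (V ⧸ W.comap V.subtype)] :
    FiniteDimensional K (M ⧸ W.comap g) := by
  let φ := (W.comap V.subtype).mkQ ∘ₗ g.codRestrict V fun m ↦ hg ⟨m, rfl⟩
  have hker : LinearMap.ker φ = W.comap g := by
    ext m
    simp [φ]
  exact ((quotEquivOfEq _ _ hker).symm.trans φ.quotKerEquivRange).symm.finiteDimensional

theorem Submodule.finiteDimensional_quotient_of_map_le (f : End K M) {P Q : Submodule K M}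
    (hPQ : P ≤ Q) (hfQ : Q.map f ≤ P) (hQ : Q ≤ LinearMap.range f ⊔ P)
    [FiniteDimensional K (M ⧸ Q)] : FiniteDimensional K (M ⧸ P) := by
  have hQP : Q.map P.mkQ ≤ LinearMap.range (Q.mapQ P f (map_le_iff_le_comap.mp hfQ)) := by
    rintro _ ⟨q, hq, rfl⟩
    obtain ⟨_, ⟨y, rfl⟩, p, hp, rfl⟩ := mem_sup.mp (hQ hq)
    refine ⟨Submodule.Quotient.mk y, ?_⟩
    simp [(Submodule.Quotient.mk_eq_zero P).mpr hp]
  have : FiniteDimensional K (Q.map P.mkQ) := Submodule.finiteDimensional_of_le hQP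
  have : FiniteDimensional K ((M ⧸ P) ⧸ Q.map P.mkQ) :=
    (quotientQuotientEquivQuotient P Q hPQ).symm.finiteDimensional
  exact Module.Finite.of_submodule_quotient (Q.map P.mkQ)

theorem Submodule.one_lt_finrank_quotient {P Q : Submodule K M} (hPQ : P < Q) (hQ : Q ≠ ⊤)
    [FiniteDimensional K (M ⧸ P)] : 1 < finrank K (M ⧸ P) := by
  have hW_ne_bot : Q.map P.mkQ ≠ ⊥ := by
    rw [Ne, ← le_bot_iff, map_le_iff_le_comap, comap_bot, ker_mkQ]
    exact hPQ.not_ge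
  have hW_ne_top : Q.map P.mkQ ≠ ⊤ := by
    rwa [Ne, map_mkQ_eq_top, sup_eq_right.mpr hPQ.le]
  calc 1 ≤ finrank K (Q.map P.mkQ) := one_le_finrank_iff.mpr hW_ne_bot
    _ < finrank K (M ⧸ P) := finrank_lt hW_ne_top

namespace Module.End

variable (f : End K M)

theorem range_pow_succ_le (n : ℕ) : LinearMap.range (f ^ (n + 1)) ≤ LinearMap.range (f ^ n) := by
  rw [pow_succ, mul_eq_comp]
  exact LinearMap.range_comp_le_range _ _

theorem comap_pow_range_pow_add (n j : ℕ) :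
    (LinearMap.range (f ^ (n + j))).comap (f ^ n) =
      LinearMap.range (f ^ j) ⊔ LinearMap.ker (f ^ n) := by
  rw [pow_add, mul_eq_comp, LinearMap.range_comp, comap_map_eq]

theorem map_ker_pow_le (n : ℕ) : (LinearMap.ker (f ^ n)).map f ≤ LinearMap.ker (f ^ n) := by
  rintro _ ⟨z, hz, rfl⟩
  rw [SetLike.mem_coe, LinearMap.mem_ker] at hz
  rw [LinearMap.mem_ker, ← mul_apply, ← pow_succ, pow_succ', mul_apply, hz, map_zero]

theorem map_range_pow_le (j : ℕ) : (LinearMap.range (f ^ j)).map f ≤ LinearMap.range (f ^ j) := by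
  rw [← LinearMap.range_comp, ← mul_eq_comp, ← pow_succ']
  exact f.range_pow_succ_le j

theorem map_range_sq_sup_ker_le (n : ℕ) :
    (LinearMap.range (f ^ 2) ⊔ LinearMap.ker (f ^ n)).map f ≤
      LinearMap.range (f ^ 2) ⊔ LinearMap.ker (f ^ n) := by
  rw [Submodule.map_sup]
  exact sup_le_sup (f.map_range_pow_le 2) (f.map_ker_pow_le n)

theorem finiteDimensional_quotient_range_sq_sup_ker (n : ℕ)
    [FiniteDimensional K (LinearMap.range (f ^ n) ⧸
      (LinearMap.range (f ^ (n + 1))).comap (LinearMap.range (f ^ n)).subtype)] :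
    FiniteDimensional K (M ⧸ (LinearMap.range (f ^ 2) ⊔ LinearMap.ker (f ^ n))) := by
  have hQ := f.comap_pow_range_pow_add n 1
  rw [pow_one] at hQ
  have : FiniteDimensional K (M ⧸ (LinearMap.range f ⊔ LinearMap.ker (f ^ n))) := by
    rw [← hQ]
    exact finiteDimensional_quotient_comap le_rfl
  refine finiteDimensional_quotient_of_map_le f (Q := LinearMap.range f ⊔ LinearMap.ker (f ^ n))
    (sup_le_sup_right (by simpa using f.range_pow_succ_le 1) _) ?_
    (sup_le le_sup_left (le_sup_right.trans le_sup_right))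
  rw [Submodule.map_sup, ← LinearMap.range_comp, ← mul_eq_comp, ← sq]
  exact sup_le_sup_left (f.map_ker_pow_le n) _

theorem one_lt_finrank_quotient_range_sq_sup_ker (n : ℕ)
    (h₁ : LinearMap.range (f ^ n) ≠ LinearMap.range (f ^ (n + 1)))
    (h₂ : LinearMap.range (f ^ (n + 1)) ≠ LinearMap.range (f ^ (n + 2)))
    [FiniteDimensional K (M ⧸ (LinearMap.range (f ^ 2) ⊔ LinearMap.ker (f ^ n)))] :
    1 < finrank K (M ⧸ (LinearMap.range (f ^ 2) ⊔ LinearMap.ker (f ^ n))) := by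
  refine one_lt_finrank_quotient (Q := (LinearMap.range (f ^ (n + 1))).comap (f ^ n)) ?_ ?_
  · rw [← f.comap_pow_range_pow_add n 2]
    refine lt_of_le_not_ge (comap_mono (f.range_pow_succ_le (n + 1))) fun h ↦ h₂ ?_
    refine le_antisymm ?_ (f.range_pow_succ_le (n + 1))
    rintro _ ⟨y, rfl⟩
    have hfy : (f ^ n) (f y) = (f ^ (n + 1)) y := by rw [pow_succ, mul_apply]
    simpa [hfy] using h (show f y ∈ _ from ⟨y, hfy.symm⟩)
  · exact fun h ↦ h₁ (le_antisymm (LinearMap.range_le_iff_comap.mpr h) (f.range_pow_succ_le n))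

end Module.End

end LinearAlgebra

section ClosedRange

variable {𝕜 E F : Type*} [NontriviallyNormedField 𝕜] [CompleteSpace 𝕜] [NormedAddCommGroup E]
  [NormedSpace 𝕜 E] [CompleteSpace E] [NormedAddCommGroup F] [NormedSpace 𝕜 F] [CompleteSpace F]

theorem ContinuousLinearMap.isClosed_range_of_finiteDimensional_quotient
    (B : E →L[𝕜] F) [FiniteDimensional 𝕜 (F ⧸ LinearMap.range (B : E →ₗ[𝕜] F))] :
    IsClosed ((LinearMap.range (B : E →ₗ[𝕜] F) : Submodule 𝕜 F) : Set F) := by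
  obtain ⟨C, hC⟩ := (LinearMap.range (B : E →ₗ[𝕜] F)).exists_isCompl
  have : FiniteDimensional 𝕜 C := (quotientEquivOfIsCompl _ C hC).finiteDimensional
  have : CompleteSpace C := FiniteDimensional.complete 𝕜 C
  let Ψ : E × C →L[𝕜] F := B.coprod C.subtypeL
  have hΨ : Function.Surjective Ψ := fun y ↦ by
    obtain ⟨_, ⟨e, rfl⟩, c, hc, rfl⟩ := mem_sup.mp (hC.sup_eq_top ▸ mem_top : y ∈ _ ⊔ C)
    exact ⟨(e, ⟨c, hc⟩), rfl⟩
  -- a value `B e + c` of `Ψ` lies in the range of `B` exactly when `c = 0`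
  have hcompl : ((LinearMap.range (B : E →ₗ[𝕜] F) : Submodule 𝕜 F) : Set F)ᶜ =
      Ψ '' (Set.univ ×ˢ {0}ᶜ) := by
    ext y
    constructor
    · intro hy
      obtain ⟨⟨e, c⟩, rfl⟩ := hΨ y
      refine ⟨(e, c), ⟨trivial, fun hc ↦ hy ?_⟩, rfl⟩
      obtain rfl : c = 0 := hc
      exact ⟨e, by simp [Ψ]⟩
    · rintro ⟨⟨e, c⟩, ⟨-, hc⟩, rfl⟩ hmem
      have hBe : B e + c ∈ LinearMap.range (B : E →ₗ[𝕜] F) := hmem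
      have hc_range : (c : F) ∈ LinearMap.range (B : E →ₗ[𝕜] F) :=
        (add_mem_cancel_left (LinearMap.mem_range_self (B : E →ₗ[𝕜] F) e)).mp hBe
      exact hc (Subtype.ext (disjoint_def.mp hC.disjoint c hc_range c.2))
  rw [← isOpen_compl_iff, hcompl]
  exact ContinuousLinearMap.isOpenMap Ψ hΨ _ (isOpen_univ.prod isOpen_compl_singleton)

theorem ContinuousLinearMap.isClosed_range_sup_of_finiteDimensional_quotient
    (B : E →L[𝕜] F) {V : Submodule 𝕜 F} (hV : IsClosed (V : Set F))
    [FiniteDimensional 𝕜 (F ⧸ (LinearMap.range (B : E →ₗ[𝕜] F) ⊔ V))] :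
    IsClosed ((LinearMap.range (B : E →ₗ[𝕜] F) ⊔ V : Submodule 𝕜 F) : Set F) := by
  have : CompleteSpace V := hV.completeSpace_coe
  have hrange : LinearMap.range ((B.coprod V.subtypeL : E × V →L[𝕜] F) : E × V →ₗ[𝕜] F) =
      LinearMap.range (B : E →ₗ[𝕜] F) ⊔ V := by
    rw [ContinuousLinearMap.coe_coprod, LinearMap.range_coprod]
    simp
  have : FiniteDimensional 𝕜
      (F ⧸ LinearMap.range ((B.coprod V.subtypeL : E × V →L[𝕜] F) : E × V →ₗ[𝕜] F)) :=
    hrange ▸ ‹_›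
  exact hrange ▸ (B.coprod V.subtypeL).isClosed_range_of_finiteDimensional_quotient

end ClosedRange

def Module.End.homogeneousOrbit {R M : Type*} [Semiring R] [AddCommMonoid M] [Module R M]
    (f : End R M) (x : M) : Set M :=
  {y | ∃ (c : R) (n : ℕ), y = c • (f ^ n) x}

theorem Module.End.pow_apply_of_sq_sub_smul_eq_zero {R M : Type*} [CommRing R] [AddCommGroup M]
    [Module R M] {A : End R M} {l : R} (hA : (A - l • 1) ^ 2 = 0) (v : M) (k : ℕ) :
    (A ^ k) v = l ^ k • v + ((k : R) * l ^ (k - 1)) • (A - l • 1) v := by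
  set N := A - l • 1
  have hN : N (N v) = 0 := by rw [← mul_apply, ← sq, hA, LinearMap.zero_apply]
  have hAN : ∀ z, A z = l • z + N z := fun z ↦ by simp [N]
  induction k with
  | zero => simp
  | succ k ih =>
    rw [pow_succ', mul_apply, ih, map_add, map_smul, map_smul, hAN v, hAN (N v), hN, add_zero]
    rcases k with _ | k
    · simp
    · simp only [Nat.add_sub_cancel, Nat.cast_add, Nat.cast_one]
      module

theorem Dense.homogeneousOrbit_of_semiconj {R Z W : Type*} [Semiring R] [AddCommMonoid Z]
    [Module R Z] [TopologicalSpace Z] [AddCommMonoid W] [Module R W] [TopologicalSpace W]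
    {A : End R Z} {B : End R W} {Φ : Z →ₗ[R] W} (hΦ : Continuous Φ)
    (hΦ_surj : Function.Surjective Φ) (hAB : B ∘ₗ Φ = Φ ∘ₗ A) {v : Z}
    (hv : Dense (A.homogeneousOrbit v)) : Dense (B.homogeneousOrbit (Φ v)) := by
  refine (hΦ_surj.denseRange.dense_image hΦ hv).mono ?_
  rintro _ ⟨_, ⟨c, k, rfl⟩, rfl⟩
  exact ⟨c, k, by rw [map_smul, ← LinearMap.comp_apply, ← End.commute_pow_left_of_commute hAB,
    LinearMap.comp_apply]⟩

section HomogeneousOrbit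

variable {𝕜 : Type*} [RCLike 𝕜]

def jordanBlock (l : 𝕜) : End 𝕜 (𝕜 × 𝕜) :=
  (l • LinearMap.fst 𝕜 𝕜 𝕜).prod (LinearMap.fst 𝕜 𝕜 𝕜 + l • LinearMap.snd 𝕜 𝕜 𝕜)

theorem jordanBlock_pow_apply (l : 𝕜) (k : ℕ) :
    (jordanBlock l ^ k) (1, 0) = (l ^ k, k * l ^ (k - 1)) := by
  have hJ : (jordanBlock l - l • 1) ^ 2 = 0 := by
    ext <;> simp [jordanBlock, sq]
  rw [End.pow_apply_of_sq_sub_smul_eq_zero hJ]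
  ext <;> simp [jordanBlock]

theorem not_dense_homogeneousOrbit_jordanBlock (l : 𝕜) :
    ¬ Dense ((jordanBlock l).homogeneousOrbit (1, 0)) := by
  suffices ∃ C : Set (𝕜 × 𝕜), IsClosed C ∧ C ≠ Set.univ ∧
      (jordanBlock l).homogeneousOrbit (1, 0) ⊆ C by
    obtain ⟨C, hC, hC_ne, hsub⟩ := this
    exact fun hd ↦ hC_ne (Set.eq_univ_of_univ_subset (hd.closure_eq ▸ closure_minimal hsub hC))
  rcases eq_or_ne l 0 with rfl | hl
  · refine ⟨{p | p.1 * p.2 = 0}, isClosed_eq (by fun_prop) (by fun_prop), fun h ↦ ?_, ?_⟩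
    · simpa using Set.eq_univ_iff_forall.mp h (1, 1)
    · rintro _ ⟨c, k, rfl⟩
      rcases k with _ | k <;> simp [jordanBlock_pow_apply]
  · -- the orbit points satisfy `l b = k a`, and `|k - 1/2| ≥ 1/2` for every natural `k`
    refine ⟨{p | ‖p.1‖ / 2 ≤ ‖l * p.2 - p.1 / 2‖}, isClosed_le (by fun_prop) (by fun_prop),
      fun h ↦ ?_, ?_⟩
    · have := Set.eq_univ_iff_forall.mp h (1, 1 / (2 * l))
      norm_num [hl] at this
    · rintro _ ⟨c, k, rfl⟩
      have hk : l * (k * l ^ (k - 1)) = k * l ^ k := by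
        rcases k with _ | k
        · simp
        · simp only [Nat.add_sub_cancel, pow_succ]
          ring
      have hk_half : 1 / 2 ≤ ‖(k : 𝕜) - 1 / 2‖ := by
        rw [show (k : 𝕜) - 1 / 2 = ((k - 1 / 2 : ℝ) : 𝕜) by push_cast; ring, RCLike.norm_ofReal]
        rcases k with _ | k
        · norm_num
        · exact le_abs.mpr (Or.inl (by push_cast; linarith [(k.cast_nonneg : (0 : ℝ) ≤ k)]))
      simp only [jordanBlock_pow_apply, Prod.smul_mk, smul_eq_mul, Set.mem_ofPred_eq]
      calc ‖c * l ^ k‖ / 2 = 1 / 2 * ‖c * l ^ k‖ := by ring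
        _ ≤ ‖(k : 𝕜) - 1 / 2‖ * ‖c * l ^ k‖ := by gcongr
        _ = ‖l * (c * (k * l ^ (k - 1))) - c * l ^ k / 2‖ := by
          rw [← norm_mul, mul_left_comm l, hk]
          ring_nf

theorem Module.End.finrank_le_one_of_dense_homogeneousOrbit {Z : Type*} [NormedAddCommGroup Z]
    [NormedSpace 𝕜 Z] [FiniteDimensional 𝕜 Z] {A : End 𝕜 Z} {l : 𝕜} (hA : (A - l • 1) ^ 2 = 0)
    {v : Z} (hv : Dense (A.homogeneousOrbit v)) : finrank 𝕜 Z ≤ 1 := by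
  set N := A - l • 1
  have hN : ∀ z, N (N z) = 0 := fun z ↦ by rw [← mul_apply, ← sq, hA, LinearMap.zero_apply]
  have hAN : ∀ z, A z = l • z + N z := fun z ↦ by simp [N]
  by_cases hNv : N v ∈ 𝕜 ∙ v
  · have hsub : A.homogeneousOrbit v ⊆ (𝕜 ∙ v : Submodule 𝕜 Z) := by
      rintro _ ⟨c, k, rfl⟩
      rw [pow_apply_of_sq_sub_smul_eq_zero hA]
      exact smul_mem _ _ (add_mem (smul_mem _ _ (mem_span_singleton_self v)) (smul_mem _ _ hNv))
    have htop : (𝕜 ∙ v) = ⊤ := coe_eq_univ.mp (Set.eq_univ_of_univ_subset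
      (hv.closure_eq ▸ closure_minimal hsub (closed_of_finiteDimensional _)))
    rw [← finrank_top, ← htop]
    simpa using finrank_span_le_card ({v} : Set Z)
  · -- a functional `ψ` with `ψ v = 0` and `ψ (N v) = 1` semiconjugates `A` to the Jordan block
    obtain ⟨φ, hφ, hφv⟩ := (𝕜 ∙ v).exists_dual_map_eq_bot_of_notMem hNv inferInstance
    set ψ := (φ (N v))⁻¹ • φ
    have hψv : ψ v = 0 := by
      have : φ v ∈ (⊥ : Submodule 𝕜 𝕜) := hφv ▸ mem_map_of_mem (mem_span_singleton_self v)
      simp [ψ, (mem_bot 𝕜).mp this]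
    have hψNv : ψ (N v) = 1 := inv_mul_cancel₀ hφ
    let Φ : Z →ₗ[𝕜] 𝕜 × 𝕜 := (ψ ∘ₗ N).prod ψ
    have hΦv : Φ v = (1, 0) := by simp [Φ, hψv, hψNv]
    have hΦ_surj : Function.Surjective Φ := fun p ↦
      ⟨p.1 • v + p.2 • N v, by simp [Φ, hψv, hψNv, hN]⟩
    have hAB : jordanBlock l ∘ₗ Φ = Φ ∘ₗ A := by
      ext z <;> simp [Φ, jordanBlock, hAN z, hN, add_comm]
    exact (not_dense_homogeneousOrbit_jordanBlock l
      (hΦv ▸ hv.homogeneousOrbit_of_semiconj (LinearMap.continuous_of_finiteDimensional Φ)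
        hΦ_surj hAB)).elim

theorem finrank_quotient_le_one_of_dense_homogeneousOrbit {X : Type*} [NormedAddCommGroup X]
    [NormedSpace 𝕜 X] {T : End 𝕜 X} {x : X} (hx : Dense (T.homogeneousOrbit x))
    {P : Submodule 𝕜 X} [IsClosed (P : Set X)] [FiniteDimensional 𝕜 (X ⧸ P)]
    (hTP : P ≤ P.comap T) (l : 𝕜) (hP : LinearMap.range ((T - l • 1) ^ 2) ≤ P) :
    finrank 𝕜 (X ⧸ P) ≤ 1 := by
  set A := P.mapQ P T hTP
  have hAT : (A - l • 1) ∘ₗ P.mkQ = P.mkQ ∘ₗ (T - l • 1) := by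
    ext z
    simp [A]
  have hA : (A - l • 1) ^ 2 = 0 := by
    apply linearMap_qext
    rw [End.commute_pow_left_of_commute hAT 2, LinearMap.zero_comp]
    ext z
    simpa using hP (LinearMap.mem_range_self _ z)
  exact End.finrank_le_one_of_dense_homogeneousOrbit hA
    (hx.homogeneousOrbit_of_semiconj continuous_quot_mk (mkQ_surjective P) (mapQ_mkQ _ _ _))

end HomogeneousOrbit

theorem finiteDimensional_rangeQuot_of_range_eq {S : X →L[ℂ] X} {q : ℕ}
    (h : LinearMap.range ((S ^ q : X →L[ℂ] X) : X →ₗ[ℂ] X) =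
      LinearMap.range ((S ^ (q + 1) : X →L[ℂ] X) : X →ₗ[ℂ] X)) :
    FiniteDimensional ℂ (rangeQuot S q) := by
  have : Subsingleton (rangeQuot S q) := by
    rw [Submodule.Quotient.subsingleton_iff, ← h, comap_subtype_self]
  infer_instance

theorem range_pow_eq_or_of_finiteDimensional_rangeQuot [CompleteSpace X] {T : X →L[ℂ] X} {x : X}
    (hx : Dense (End.homogeneousOrbit (T : X →ₗ[ℂ] X) x)) (l : ℂ) (n : ℕ)
    [FiniteDimensional ℂ (rangeQuot (shiftOp T l) n)] :
    LinearMap.range ((shiftOp T l ^ n : X →L[ℂ] X) : X →ₗ[ℂ] X) =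
        LinearMap.range ((shiftOp T l ^ (n + 1) : X →L[ℂ] X) : X →ₗ[ℂ] X) ∨
      LinearMap.range ((shiftOp T l ^ (n + 1) : X →L[ℂ] X) : X →ₗ[ℂ] X) =
        LinearMap.range ((shiftOp T l ^ (n + 2) : X →L[ℂ] X) : X →ₗ[ℂ] X) := by
  set S := shiftOp T l
  set f : End ℂ X := (S : X →ₗ[ℂ] X)
  have hfd : FiniteDimensional ℂ (LinearMap.range (f ^ n) ⧸
      (LinearMap.range (f ^ (n + 1))).comap (LinearMap.range (f ^ n)).subtype) := by
    rw [← ContinuousLinearMap.toLinearMap_pow, ← ContinuousLinearMap.toLinearMap_pow]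
    assumption
  simp only [ContinuousLinearMap.toLinearMap_pow]
  by_contra! ⟨h₁, h₂⟩
  set P := LinearMap.range (f ^ 2) ⊔ LinearMap.ker (f ^ n)
  have : FiniteDimensional ℂ (X ⧸ P) := f.finiteDimensional_quotient_range_sq_sup_ker n
  have hrank : 1 < finrank ℂ (X ⧸ P) := f.one_lt_finrank_quotient_range_sq_sup_ker n h₁ h₂
  have : IsClosed (P : Set X) := by
    have hK : IsClosed ((LinearMap.ker (f ^ n) : Submodule ℂ X) : Set X) := by
      rw [← ContinuousLinearMap.toLinearMap_pow]
      exact (S ^ n).isClosed_ker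
    have : FiniteDimensional ℂ (X ⧸ (LinearMap.range ((S ^ 2 : X →L[ℂ] X) : X →ₗ[ℂ] X) ⊔
        LinearMap.ker (f ^ n))) := by
      rwa [ContinuousLinearMap.toLinearMap_pow]
    have := (S ^ 2).isClosed_range_sup_of_finiteDimensional_quotient hK
    rwa [ContinuousLinearMap.toLinearMap_pow] at this
  have hTf : (T : X →ₗ[ℂ] X) - l • 1 = f := by
    ext z
    simp [f, S, shiftOp]
  have hTP : P ≤ P.comap (T : X →ₗ[ℂ] X) := fun z hz ↦ by
    have hfz : f z ∈ P := f.map_range_sq_sup_ker_le n (mem_map_of_mem hz)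
    rw [← hTf] at hfz
    simpa using add_mem hfz (smul_mem P l hz)
  have := finrank_quotient_le_one_of_dense_homogeneousOrbit hx hTP l (hTf ▸ le_sup_left)
  omega

/-- If `T` is a supercyclic bounded operator on a complex Banach space
`X` (i.e. for some `x ∈ X` the homogeneous orbit `{λ Tⁿ x : λ ∈ ℂ, n ∈ ℕ}` is dense),
then `σ_desc(T) = σ_desc^e(T)`. -/
theorem supercyclic_descentSpectrum_eq_essDescentSpectrum
    {X : Type*} [NormedAddCommGroup X] [NormedSpace ℂ X] [CompleteSpace X]
    (T : X →L[ℂ] X)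
    (hsc : ∃ x : X, Dense {y : X | ∃ (c : ℂ) (n : ℕ), y = c • (T ^ n) x}) :
    descentSpectrum T = essDescentSpectrum T := by
  obtain ⟨x, hx⟩ := hsc
  have hx' : Dense (End.homogeneousOrbit (T : X →ₗ[ℂ] X) x) := by
    simpa [End.homogeneousOrbit, ← ContinuousLinearMap.toLinearMap_pow] using hx
  ext l
  refine ⟨fun hdesc n _ ↦ ?_, fun hess q hq ↦ hess q (finiteDimensional_rangeQuot_of_range_eq hq)⟩
  rcases range_pow_eq_or_of_finiteDimensional_rangeQuot hx' l n with h | h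
  exacts [hdesc n h, hdesc (n + 1) h]
end
end

section
/- Let T be the unilateral right shift operator on ℓ²(ℕ), defined by T(x₁, x₂, x₃, …) = (0, x₁, x₂, …). Then the closed unit disk {λ ∈ ℂ : |λ| ≤ 1} is contained in the descent spectrum σ_desc(T), and the essential descent spectrum σ_desc^e(T) is contained in the unit circle {λ ∈ ℂ : |λ| = 1}. -/
noncomputable section

abbrev Hl := lp (fun _ : ℕ => ℂ) 2

namespace ShiftAux

lemma sq_summable (f : Hl) : Summable (fun n => ‖f n‖ ^ (2:ℝ)) := by
  have := lp.memℓp f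
  rw [memℓp_gen_iff (by norm_num : 0 < (2:ENNReal).toReal)] at this
  simpa using this

lemma coord_tendsto (f : Hl) :
    Filter.Tendsto (fun n => (f n : ℂ)) Filter.atTop (nhds 0) := by
  have h := (sq_summable f).tendsto_atTop_zero
  rw [tendsto_zero_iff_norm_tendsto_zero]
  have : (fun n => ‖f n‖) = fun n => Real.sqrt (‖f n‖ ^ (2:ℝ)) := by
    funext n
    rw [show (2:ℝ) = ((2:ℕ):ℝ) by norm_num, Real.rpow_natCast, Real.sqrt_sq (norm_nonneg _)]
  rw [this]
  simpa using h.sqrt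

lemma norm_coord_le (f : Hl) (n : ℕ) : ‖f n‖ ≤ ‖f‖ :=
  lp.norm_apply_le_norm (by norm_num) f n

end ShiftAux

namespace ShiftAux

def shiftOp' (T : Hl →L[ℂ] Hl) (l : ℂ) : Hl →L[ℂ] Hl := T - l • (1 : Hl →L[ℂ] Hl)

lemma shiftOp_coord (T : Hl →L[ℂ] Hl) (l : ℂ) (x : Hl) (n : ℕ) :
    (shiftOp' T l x) n = (T x) n - l * x n := by
  have : shiftOp' T l x = T x - l • x := by
    simp [shiftOp']
  rw [this, lp.coeFn_sub, Pi.sub_apply, lp.coeFn_smul, Pi.smul_apply, smul_eq_mul]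

variable {T : Hl →L[ℂ] Hl}
  (hT : ∀ x : Hl, (T x) 0 = 0 ∧ ∀ n : ℕ, (T x) (n + 1) = x n)

include hT

lemma shift_inj (l : ℂ) : Function.Injective (shiftOp' T l) := by
  intro x y hxy
  rw [← sub_eq_zero, ← map_sub] at hxy
  set z := x - y with hz
  suffices hzz : z = 0 by
    rwa [sub_eq_zero] at hzz
  have hc : ∀ n, (shiftOp' T l z) n = 0 := by
    intro n; rw [hxy]; simp
  have h0 : l * z 0 = 0 := by
    have := hc 0; rw [shiftOp_coord, (hT z).1] at this; linear_combination -this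
  have hs : ∀ n, z n = l * z (n+1) := by
    intro n
    have := hc (n+1); rw [shiftOp_coord, (hT z).2 n] at this
    linear_combination this
  have hzero : ∀ n, z n = 0 := by
    rcases eq_or_ne l 0 with rfl | hl
    · intro n; rw [hs n, zero_mul]
    · intro n
      induction n with
      | zero => exact (mul_eq_zero.mp h0).resolve_left hl
      | succ k ih =>
        have h := hs k
        rw [ih] at h
        exact (mul_eq_zero.mp h.symm).resolve_left hl
  exact lp.ext (funext fun n => by simpa using hzero n)

lemma norm_T_apply (x : Hl) : ‖T x‖ = ‖x‖ := by
  have h2 : 0 < (2 : ENNReal).toReal := by norm_num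
  rw [lp.norm_eq_tsum_rpow h2 (T x), lp.norm_eq_tsum_rpow h2 x]
  congr 1
  have h22 : (2:ENNReal).toReal = (2:ℝ) := by norm_num
  rw [h22]
  have hsum : Summable (fun n => ‖(T x) n‖ ^ ((2:ℝ))) := sq_summable (T x)
  rw [Summable.tsum_eq_zero_add hsum, (hT x).1]
  simp only [(hT x).2]
  rw [norm_zero, Real.zero_rpow (by norm_num), zero_add]

lemma norm_T_le : ‖T‖ ≤ 1 :=
  T.opNorm_le_bound zero_le_one (fun x => by rw [norm_T_apply hT, one_mul])

lemma single_not_mem_range {l : ℂ} (hl : ‖l‖ ≤ 1) :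
    lp.single 2 0 1 ∉ LinearMap.range ((shiftOp' T l : Hl →L[ℂ] Hl) : Hl →ₗ[ℂ] Hl) := by
  rintro ⟨x, hx⟩
  have hc : ∀ n, (shiftOp' T l x) n = (lp.single 2 0 1 : Hl) n := fun n => by rw [← hx]; rfl
  have h0 : -(l * x 0) = 1 := by
    have := hc 0
    rwa [shiftOp_coord, (hT x).1, lp.single_apply_self, zero_sub] at this
  have hs : ∀ n, x n = l * x (n+1) := by
    intro n
    have := hc (n+1)
    rw [shiftOp_coord, (hT x).2 n, lp.single_apply_ne 2 0 1 (Nat.succ_ne_zero n)] at this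
    linear_combination this
  have key : ∀ N, l^(N+1) * x N = -1 := by
    intro N
    induction N with
    | zero => rw [pow_one]; linear_combination -h0
    | succ k ih =>
      calc l^(k+2) * x (k+1) = l^(k+1) * (l * x (k+1)) := by ring
      _ = l^(k+1) * x k := by rw [← hs k]
      _ = -1 := ih
  have htend := (tendsto_zero_iff_norm_tendsto_zero.mp (coord_tendsto x))
  have hev : ∀ᶠ N in Filter.atTop, ‖x N‖ < 1 :=
    htend.eventually (eventually_lt_nhds zero_lt_one)
  obtain ⟨N, hN⟩ := hev.exists
  have : (1:ℝ) = ‖l^(N+1) * x N‖ := by rw [key N]; simp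
  rw [norm_mul, norm_pow] at this
  have hle : ‖l‖^(N+1) * ‖x N‖ ≤ 1 * ‖x N‖ :=
    mul_le_mul_of_nonneg_right (pow_le_one₀ (norm_nonneg l) hl) (norm_nonneg _)
  rw [one_mul] at hle
  linarith [this.le.trans hle]

end ShiftAux

namespace ShiftAux

/-- Evaluation at a coordinate as a continuous linear map. -/
def evalCLM (n : ℕ) : Hl →L[ℂ] ℂ :=
  LinearMap.mkContinuous
    { toFun := fun f => f n
      map_add' := fun f g => congrFun (lp.coeFn_add f g) n
      map_smul' := fun c f => congrFun (lp.coeFn_smul c f) n }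
    1 (fun f => by simpa using norm_coord_le f n)

@[simp] lemma evalCLM_apply (n : ℕ) (f : Hl) : evalCLM n f = f n := rfl

variable {T : Hl →L[ℂ] Hl}
  (hT : ∀ x : Hl, (T x) 0 = 0 ∧ ∀ n : ℕ, (T x) (n + 1) = x n)

include hT

set_option maxHeartbeats 1000000 in
lemma solvable {l : ℂ} (hl : ‖l‖ < 1) (y : Hl) :
    ∃ c : ℂ, y - c • (lp.single 2 0 1 : Hl) ∈ LinearMap.range ((shiftOp' T l : Hl →L[ℂ] Hl) : Hl →ₗ[ℂ] Hl) := by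
  -- the shifted sequences
  have hmem : ∀ k : ℕ, Memℓp (fun n : ℕ => y (n + k + 1)) 2 := by
    intro k
    rw [memℓp_gen_iff (by norm_num : 0 < (2:ENNReal).toReal)]
    have : Summable (fun n : ℕ => ‖y (n + (k+1))‖ ^ (2:ℝ)) :=
      (summable_nat_add_iff (k+1)).2 (sq_summable y)
    simpa [← add_assoc, show (2:ENNReal).toReal = (2:ℝ) by norm_num] using this
  set z : ℕ → Hl := fun k => ⟨fun n => y (n + k + 1), hmem k⟩ with hz
  have hzcoord : ∀ k n, (z k) n = y (n + k + 1) := fun k n => rfl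
  have hznorm : ∀ k, ‖z k‖ ≤ ‖y‖ := by
    intro k
    have h2 : 0 < (2:ENNReal).toReal := by norm_num
    rw [lp.norm_eq_tsum_rpow h2 (z k), lp.norm_eq_tsum_rpow h2 y,
      show (2:ENNReal).toReal = (2:ℝ) from by norm_num]
    apply Real.rpow_le_rpow (tsum_nonneg fun n => Real.rpow_nonneg (norm_nonneg _) _)
    · refine Summable.tsum_le_tsum_of_inj (fun n => n + k + 1)
        (fun a b hab => by simpa using hab) (fun n _ => Real.rpow_nonneg (norm_nonneg _) _)
        (fun n => le_of_eq (by rw [hzcoord])) ?_ ?_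
      · exact Summable.congr ((summable_nat_add_iff (k+1)).2 (sq_summable y))
          (fun n => by rw [hzcoord, ← add_assoc])
      · exact sq_summable y
    · norm_num
  -- the series
  set s : ℕ → Hl := fun k => l ^ k • z k with hsdef
  have hnorm_s : ∀ k, ‖s k‖ ≤ ‖l‖ ^ k * ‖y‖ := by
    intro k
    rw [hsdef]
    calc ‖l ^ k • z k‖ = ‖l ^ k‖ * ‖z k‖ := norm_smul _ _
    _ ≤ ‖l‖ ^ k * ‖y‖ := by
        rw [norm_pow]
        exact mul_le_mul_of_nonneg_left (hznorm k) (pow_nonneg (norm_nonneg _) _)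
  have hsummable : Summable s :=
    Summable.of_norm_bounded ((summable_geometric_of_lt_one (norm_nonneg l) hl).mul_right ‖y‖)
      hnorm_s
  set x : Hl := ∑' k, s k with hx
  have hxsum : HasSum s x := hsummable.hasSum
  -- coordinates of x
  have hcoord : ∀ n, HasSum (fun k => l ^ k * y (n + k + 1)) (x n) := by
    intro n
    have h := hxsum.mapL (evalCLM n)
    have he : (fun k => evalCLM n (s k)) = fun k => l ^ k * y (n + k + 1) := by
      funext k
      rw [evalCLM_apply, hsdef]
      simp only [lp.coeFn_smul, Pi.smul_apply, smul_eq_mul, hzcoord]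
    rwa [he] at h
  -- the recurrence for x
  have hrec : ∀ n, x n = y (n + 1) + l * x (n + 1) := by
    intro n
    have h0 : (x : ∀ _, ℂ) n = ∑' k, l ^ k * y (n + k + 1) := (hcoord n).tsum_eq.symm
    have h1 : (x : ∀ _, ℂ) (n+1) = ∑' k, l ^ k * y (n + 1 + k + 1) :=
      (hcoord (n+1)).tsum_eq.symm
    rw [h0, h1, Summable.tsum_eq_zero_add (hcoord n).summable, ← tsum_mul_left]
    congr 1
    · simp
    · exact tsum_congr (fun k => by
        rw [pow_succ, show n + 1 + k + 1 = n + (k+1) + 1 from by omega]; ring)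
  -- now verify
  refine ⟨y 0 + l * x 0, x, ?_⟩
  rw [ContinuousLinearMap.coe_coe]
  apply lp.ext
  funext n
  rw [lp.coeFn_sub, Pi.sub_apply, lp.coeFn_smul, Pi.smul_apply, smul_eq_mul]
  match n with
  | 0 =>
    rw [shiftOp_coord, (hT x).1, lp.single_apply_self]
    ring
  | (n+1) =>
    rw [shiftOp_coord, (hT x).2 n, lp.single_apply_ne 2 0 1 (Nat.succ_ne_zero n)]
    rw [hrec n]
    ring

end ShiftAux

namespace ShiftAux

variable {T : Hl →L[ℂ] Hl}
  (hT : ∀ x : Hl, (T x) 0 = 0 ∧ ∀ n : ℕ, (T x) (n + 1) = x n)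

set_option maxHeartbeats 2000000 in
lemma isUnit_shiftOp (hT' : ∀ x : Hl, (T x) 0 = 0 ∧ ∀ n : ℕ, (T x) (n + 1) = x n)
    {l : ℂ} (hl : 1 < ‖l‖) : IsUnit (shiftOp' T l) := by
  have hne : l ≠ 0 := by
    intro h; rw [h, norm_zero] at hl; linarith
  have hlt : ‖l⁻¹ • T‖ < 1 := by
    calc ‖l⁻¹ • T‖ ≤ ‖l⁻¹‖ * ‖T‖ := ContinuousLinearMap.opNorm_smul_le _ _
    _ ≤ ‖l⁻¹‖ * 1 := mul_le_mul_of_nonneg_left (norm_T_le hT') (norm_nonneg _)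
    _ = ‖l‖⁻¹ := by rw [mul_one, norm_inv]
    _ < 1 := by rw [inv_lt_one_iff₀]; right; exact hl
  set u := Units.oneSub (l⁻¹ • T) hlt with hu
  have hS : shiftOp' T l = ((-l) • (1 : Hl →L[ℂ] Hl)) * ↑u := by
    rw [hu, Units.val_oneSub, smul_mul_assoc, one_mul, smul_sub, smul_smul,
      neg_mul, mul_inv_cancel₀ hne, neg_smul l, neg_smul (1:ℂ), one_smul, sub_neg_eq_add]
    rw [shiftOp']
    abel
  rw [hS]
  refine IsUnit.mul ?_ u.isUnit
  have h1 : ((-l) • (1 : Hl →L[ℂ] Hl)) = algebraMap ℂ _ (-l) :=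
    (Algebra.algebraMap_eq_smul_one _).symm
  rw [h1]
  exact (isUnit_iff_ne_zero.mpr (neg_ne_zero.2 hne)).map (algebraMap ℂ _)

end ShiftAux


variable {X : Type*} [NormedAddCommGroup X] [NormedSpace ℂ X]

lemma pow_inj {S : Hl →L[ℂ] Hl} (h : Function.Injective S) (q : ℕ) :
    Function.Injective ⇑(S ^ q) := by
  induction q with
  | zero => intro a b hab; simpa [pow_zero] using hab
  | succ k ih =>
    intro a b hab
    rw [pow_succ] at hab
    have h2 : (S ^ k) (S a) = (S ^ k) (S b) := by
      simpa [ContinuousLinearMap.mul_apply] using hab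
    exact h (ih h2)

set_option maxHeartbeats 2000000 in
/-- For the unilateral right shift `T` on `ℓ²(ℕ)`,
`T(x₁, x₂, …) = (0, x₁, x₂, …)`, the closed unit disk is contained in `σ_desc(T)` and
`σ_desc^e(T)` is contained in the unit circle. -/
theorem rightShift_descentSpectrum_essDescentSpectrum
    (T : lp (fun _ : ℕ => ℂ) 2 →L[ℂ] lp (fun _ : ℕ => ℂ) 2)
    (hT : ∀ x : lp (fun _ : ℕ => ℂ) 2,
      (T x) 0 = 0 ∧ ∀ n : ℕ, (T x) (n + 1) = x n) :
    {l : ℂ | ‖l‖ ≤ 1} ⊆ descentSpectrum T ∧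
      essDescentSpectrum T ⊆ {l : ℂ | ‖l‖ = 1} := by
  have hSS : ∀ l : ℂ, shiftOp T l = ShiftAux.shiftOp' T l := fun l => rfl
  constructor
  · intro l hl
    rw [descentSpectrum, Set.mem_setOf_eq]
    intro q hq
    set S := shiftOp T l with hSdef
    have hinj : Function.Injective S := by rw [hSdef, hSS]; exact ShiftAux.shift_inj hT l
    have hinjq : Function.Injective ⇑(S ^ q) := pow_inj hinj q
    have hsurj : Function.Surjective S := by
      intro v
      have hmem : (S ^ q) v ∈ LinearMap.range ((S ^ (q + 1) : Hl →L[ℂ] Hl) : Hl →ₗ[ℂ] Hl) := by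
        rw [← hq]; exact ⟨v, rfl⟩
      obtain ⟨w, hw⟩ := hmem
      rw [pow_succ] at hw
      exact ⟨w, hinjq (by simpa [ContinuousLinearMap.mul_apply, Module.End.pow_apply, ContinuousLinearMap.coe_coe] using hw)⟩
    obtain ⟨x, hx⟩ := hsurj (lp.single 2 0 1)
    exact ShiftAux.single_not_mem_range hT hl ⟨x, by rw [← hSS]; exact hx⟩
  · intro l hl
    by_contra hne
    set S := shiftOp T l with hSdef
    rcases lt_or_gt_of_ne hne with hlt | hgt
    · -- |l| < 1 : rangeQuot S 0 is spanned by the class of e₀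
      refine hl 0 ?_
      have he0 : (lp.single 2 0 1 : Hl) ∈ LinearMap.range ((S ^ 0 : Hl →L[ℂ] Hl) : Hl →ₗ[ℂ] Hl) :=
        ⟨lp.single 2 0 1, by rw [pow_zero]; rfl⟩
      set p := Submodule.comap (LinearMap.range ((S ^ 0 : Hl →L[ℂ] Hl) : Hl →ₗ[ℂ] Hl)).subtype
        (LinearMap.range ((S ^ (0 + 1) : Hl →L[ℂ] Hl) : Hl →ₗ[ℂ] Hl)) with hp
      set f : ℂ →ₗ[ℂ] rangeQuot S 0 :=
        LinearMap.toSpanSingleton ℂ _ (Submodule.Quotient.mk (p := p)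
          (⟨lp.single 2 0 1, he0⟩ : LinearMap.range ((S ^ 0 : Hl →L[ℂ] Hl) : Hl →ₗ[ℂ] Hl))) with hf
      have hsurj : Function.Surjective f := by
        intro qq
        obtain ⟨⟨y, hy⟩, rfl⟩ := Submodule.Quotient.mk_surjective _ qq
        obtain ⟨c, hc⟩ := ShiftAux.solvable hT hlt y
        refine ⟨c, ?_⟩
        rw [hf, LinearMap.toSpanSingleton_apply, ← Submodule.Quotient.mk_smul,
          Submodule.Quotient.eq]
        rw [hp, Submodule.mem_comap]
        have hval : (LinearMap.range ((S ^ 0 : Hl →L[ℂ] Hl) : Hl →ₗ[ℂ] Hl)).subtype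
            (c • (⟨lp.single 2 0 1, he0⟩ : LinearMap.range ((S ^ 0 : Hl →L[ℂ] Hl) : Hl →ₗ[ℂ] Hl)) - ⟨y, hy⟩)
            = c • (lp.single 2 0 1 : Hl) - y := rfl
        rw [hval, zero_add, pow_one]
        have := Submodule.neg_mem (LinearMap.range (S : Hl →ₗ[ℂ] Hl)) (show y - c • (lp.single 2 0 1 : Hl) ∈ LinearMap.range (S : Hl →ₗ[ℂ] Hl) from hc)
        simpa [neg_sub] using this
      exact Module.Finite.of_surjective f hsurj
    · -- |l| > 1 : S is invertible, so the quotient is trivial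
      refine hl 0 ?_
      have hU : IsUnit S := by rw [hSdef, hSS]; exact ShiftAux.isUnit_shiftOp hT hgt
      obtain ⟨u, hu⟩ := hU
      have hsurj : Function.Surjective S := by
        intro v
        refine ⟨(↑u⁻¹ : Hl →L[ℂ] Hl) v, ?_⟩
        calc S ((↑u⁻¹ : Hl →L[ℂ] Hl) v) = ((↑u * ↑u⁻¹ : Hl →L[ℂ] Hl)) v := by
              rw [hu]; rfl
        _ = v := by rw [Units.mul_inv]; rfl
      have htop : LinearMap.range ((S ^ (0 + 1) : Hl →L[ℂ] Hl) : Hl →ₗ[ℂ] Hl) = ⊤ := by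
        rw [zero_add, pow_one]
        exact LinearMap.range_eq_top.2 hsurj
      have : Submodule.comap (LinearMap.range ((S ^ 0 : Hl →L[ℂ] Hl) : Hl →ₗ[ℂ] Hl)).subtype
          (LinearMap.range ((S ^ (0 + 1) : Hl →L[ℂ] Hl) : Hl →ₗ[ℂ] Hl)) = ⊤ := by
        rw [htop]; exact Submodule.comap_top _
      haveI : Subsingleton (rangeQuot S 0) :=
        Submodule.Quotient.subsingleton_iff.2 this
      exact Module.Finite.of_surjective (0 : ℂ →ₗ[ℂ] rangeQuot S 0)
        (fun q => ⟨0, Subsingleton.elim _ _⟩)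
end
end

section
/- Let T be a unilateral weighted right shift on ℓ^p(ℕ), 1 ≤ p < ∞, with bounded positive weight sequence (ω_n), i.e. T(x₁, x₂, …) = (0, ω₁x₁, ω₂x₂, …). If c(T) = lim inf_{n→∞} (ω₁⋯ω_n)^{1/n} = 0, then the descent spectrum of T coincides with its essential descent spectrum: σ_desc(T) = σ_desc^e(T). -/
noncomputable section

variable {X : Type*} [NormedAddCommGroup X] [NormedSpace ℂ X]

/-!
Every `T - λ` is injective (the weights are positive), and for an injective operator `S` both
descents are governed by the cokernel: `R(S^q) = R(S^{q+1})` holds iff `S` is onto, and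
`Sⁿ` induces `X / R(S) ≃ R(Sⁿ) / R(Sⁿ⁺¹)` for every `n`. So it suffices to show that if `R(T - λ)`
has finite codimension then `T - λ` is onto.

An injective operator with finite-codimensional range is bounded below (apply the open mapping
theorem to `(x, w) ↦ S x + w` on `X × W`, `W` a finite-dimensional complement of the range).
With `uₙ = ω₀ ⋯ ωₙ₋₁ eₙ` we have `T uₙ = uₙ₊₁` and `‖uₙ‖ = ω₀ ⋯ ωₙ₋₁`, and `c(T) = 0` makes
`ω₀ ⋯ ωₙ₋₁ < ε rⁿ` for infinitely many `n`, whatever `ε, r > 0`. For `λ = 0` this prevents `T`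
from being bounded below. For `λ ≠ 0` it shows that `R(T - λ)` is dense, since
`u k - λ⁻ᴺ u (k + N) ∈ R(T - λ)` by telescoping; dense range and bounded below give onto.
-/

namespace Module.End
variable {R M : Type*} [Ring R] [AddCommGroup M] [Module R M] {f : Module.End R M}

theorem range_pow_eq_range_pow_succ_iff_surjective (hf : Function.Injective f) (q : ℕ) :
    LinearMap.range (f ^ q) = LinearMap.range (f ^ (q + 1)) ↔ Function.Surjective f := by
  refine ⟨fun h x => ?_, fun h => ?_⟩
  · obtain ⟨y, hy⟩ : (f ^ q) x ∈ LinearMap.range (f ^ (q + 1)) :=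
      h ▸ LinearMap.mem_range_self _ x
    rw [pow_succ, mul_apply] at hy
    exact ⟨y, iterate_injective hf q hy⟩
  · rw [LinearMap.range_eq_top.mpr (iterate_surjective h q),
      LinearMap.range_eq_top.mpr (iterate_surjective h (q + 1))]

def quotientRangePowEquiv (hf : Function.Injective f) (n : ℕ) :
    (LinearMap.range (f ^ n) ⧸
        (LinearMap.range (f ^ (n + 1))).comap (LinearMap.range (f ^ n)).subtype) ≃ₗ[R]
      M ⧸ LinearMap.range f :=
  (Submodule.Quotient.equiv _ _ (LinearEquiv.ofInjective (f ^ n) (iterate_injective hf n)) (by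
    ext ⟨_, x, rfl⟩
    have hx : (⟨(f ^ n) x, x, rfl⟩ : LinearMap.range (f ^ n)) =
        LinearEquiv.ofInjective (f ^ n) (iterate_injective hf n) x := rfl
    simp [pow_succ, (iterate_injective hf n).eq_iff, hx, LinearEquiv.symm_apply_apply])).symm

end Module.End

theorem ContinuousLinearMap.exists_antilipschitzWith_of_finiteDimensional_quotient_range
    {𝕜 E F : Type*} [NontriviallyNormedField 𝕜] [CompleteSpace 𝕜]
    [NormedAddCommGroup E] [NormedSpace 𝕜 E] [CompleteSpace E]
    [NormedAddCommGroup F] [NormedSpace 𝕜 F] [CompleteSpace F]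
    (f : E →L[𝕜] F) (hf : Function.Injective f)
    [FiniteDimensional 𝕜 (F ⧸ f.range)] : ∃ K, AntilipschitzWith K f := by
  obtain ⟨W, hW⟩ := f.range.exists_isCompl
  have : FiniteDimensional 𝕜 W := (Submodule.quotientEquivOfIsCompl _ W hW).finiteDimensional
  have : CompleteSpace W := FiniteDimensional.complete 𝕜 W
  let g : E × W →L[𝕜] F := f.coprod W.subtypeL
  have hker : g.ker = ⊥ := by
    simp [g, LinearMap.ker_coprod_of_disjoint_range, hW.disjoint, LinearMap.ker_eq_bot.mpr hf]
  have hrange : g.range = ⊤ := by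
    simp [g, LinearMap.range_coprod, hW.sup_eq_top]
  let e := ContinuousLinearEquiv.ofBijective g hker hrange
  refine ⟨‖(e.symm : F →L[𝕜] E × W)‖₊, f.antilipschitz_of_bound fun x => ?_⟩
  calc ‖x‖ = ‖e.symm (e (x, 0))‖ := by simp
    _ ≤ ‖(e.symm : F →L[𝕜] E × W)‖ * ‖f x‖ := by
      simpa [e, g] using (e.symm : F →L[𝕜] E × W).le_opNorm (f x)

open Filter

theorem frequently_prod_lt_mul_pow {ω : ℕ → ℝ} (hω : ∀ n, 0 ≤ ω n) (hωbdd : ∃ C, ∀ n, ω n ≤ C)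
    (hc : liminf (fun n : ℕ => (∏ i ∈ Finset.range n, ω i) ^ ((1 : ℝ) / n)) atTop = 0)
    {r ε : ℝ} (hr : 0 < r) (hε : 0 < ε) :
    ∃ᶠ n in atTop, ∏ i ∈ Finset.range n, ω i < ε * r ^ n := by
  obtain ⟨C, hC⟩ := hωbdd
  have hP : ∀ n, 0 ≤ ∏ i ∈ Finset.range n, ω i := fun n => Finset.prod_nonneg fun i _ => hω i
  -- `liminf` on `ℝ` carries no information about a sequence that is unbounded above.
  have hbdd : ∀ᶠ n : ℕ in atTop, (∏ i ∈ Finset.range n, ω i) ^ ((1 : ℝ) / n) ≤ max C 0 := by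
    filter_upwards [eventually_ne_atTop 0] with n hn
    calc (∏ i ∈ Finset.range n, ω i) ^ ((1 : ℝ) / n)
        ≤ (max C 0 ^ n) ^ ((1 : ℝ) / n) := by
          gcongr
          · exact hP n
          · calc ∏ i ∈ Finset.range n, ω i ≤ ∏ _i ∈ Finset.range n, max C 0 :=
                Finset.prod_le_prod (fun i _ => hω i) fun i _ => (hC i).trans (le_max_left _ _)
              _ = max C 0 ^ n := by rw [Finset.prod_const, Finset.card_range]
      _ = max C 0 := by rw [one_div, Real.pow_rpow_inv_natCast (le_max_right _ _) hn]
  set a := min ε 1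
  have hlt : liminf (fun n : ℕ => (∏ i ∈ Finset.range n, ω i) ^ ((1 : ℝ) / n)) atTop < r * a := by
    rw [hc]; positivity
  have hfreq := frequently_lt_of_liminf_lt (isCoboundedUnder_ge_of_eventually_le atTop hbdd) hlt
  refine (hfreq.and_eventually (eventually_ne_atTop 0)).mono fun n ⟨hn, hn0⟩ => ?_
  calc ∏ i ∈ Finset.range n, ω i = ((∏ i ∈ Finset.range n, ω i) ^ ((1 : ℝ) / n)) ^ n := by
        rw [one_div, Real.rpow_inv_natCast_pow (hP n) hn0]
    _ < (r * a) ^ n := by gcongr; exact Real.rpow_nonneg (hP n) _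
    _ = a ^ n * r ^ n := by ring
    _ ≤ ε * r ^ n := by
        gcongr
        exact (pow_le_of_le_one (by positivity) (min_le_right _ _) hn0).trans (min_le_left _ _)

theorem sub_inv_pow_smul_mem_range_shiftOp {T : X →L[ℂ] X} {u : ℕ → X}
    (hu : ∀ j, T (u j) = u (j + 1)) {l : ℂ} (hl : l ≠ 0) (k N : ℕ) :
    u k - l⁻¹ ^ N • u (k + N) ∈ (shiftOp T l).range := by
  induction N with
  | zero => simp
  | succ N ih =>
    have hstep : shiftOp T l (-(l⁻¹ ^ (N + 1) • u (k + N))) =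
        l⁻¹ ^ N • u (k + N) - l⁻¹ ^ (N + 1) • u (k + (N + 1)) := by
      simp only [shiftOp, map_neg, map_smul, sub_apply, hu, smul_apply, one_apply_eq_self,
        smul_sub, smul_smul, pow_succ]
      rw [mul_assoc, inv_mul_cancel₀ hl, mul_one, ← add_assoc]
      abel
    simpa using add_mem ih ⟨_, hstep⟩

namespace WeightedShift

variable {p : ENNReal} [Fact (1 ≤ p)] {ω : ℕ → ℝ}
  {T : lp (fun _ : ℕ => ℂ) p →L[ℂ] lp (fun _ : ℕ => ℂ) p}

theorem shiftOp_apply_apply (l : ℂ) (x : lp (fun _ : ℕ => ℂ) p) (j : ℕ) :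
    shiftOp T l x j = T x j - l * x j :=
  rfl

def scaledBasis (p : ENNReal) (ω : ℕ → ℝ) (n : ℕ) : lp (fun _ : ℕ => ℂ) p :=
  lp.single p n ((∏ i ∈ Finset.range n, ω i : ℝ) : ℂ)

theorem norm_scaledBasis (hω : ∀ n, 0 ≤ ω n) (n : ℕ) :
    ‖scaledBasis p ω n‖ = ∏ i ∈ Finset.range n, ω i := by
  rw [scaledBasis, lp.norm_single (zero_lt_one.trans_le Fact.out), Complex.norm_real,
    Real.norm_of_nonneg (Finset.prod_nonneg fun i _ => hω i)]

theorem apply_scaledBasis (hT : ∀ x : lp (fun _ : ℕ => ℂ) p,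
      (T x) 0 = 0 ∧ ∀ n : ℕ, (T x) (n + 1) = (ω n : ℂ) * x n) (n : ℕ) :
    T (scaledBasis p ω n) = scaledBasis p ω (n + 1) := by
  ext (_ | j)
  · simp [(hT _).1, scaledBasis]
  · rw [(hT _).2]
    rcases eq_or_ne j n with rfl | hj
    · simp [scaledBasis, Finset.prod_range_succ, mul_comm]
    · simp [scaledBasis, hj]

theorem injective_shiftOp (hω : ∀ n, ω n ≠ 0) (hT : ∀ x : lp (fun _ : ℕ => ℂ) p,
      (T x) 0 = 0 ∧ ∀ n : ℕ, (T x) (n + 1) = (ω n : ℂ) * x n) (l : ℂ) :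
    Function.Injective (shiftOp T l) := by
  rw [injective_iff_map_eq_zero]
  intro x hx
  have hcoord : ∀ j, T x j = l * x j := fun j => by
    simpa [shiftOp_apply_apply, sub_eq_zero] using congrArg (· j) hx
  ext j
  rcases eq_or_ne l 0 with rfl | hl
  · simpa [(hT x).2, hω j] using hcoord (j + 1)
  · induction j with
    | zero => simpa [(hT x).1, hl, eq_comm] using hcoord 0
    | succ j ih => simpa [(hT x).2, ih, hl, eq_comm] using hcoord (j + 1)

theorem not_antilipschitzWith (hω : ∀ n, 0 ≤ ω n) (hωbdd : ∃ C : ℝ, ∀ n, ω n ≤ C)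
    (hT : ∀ x : lp (fun _ : ℕ => ℂ) p,
      (T x) 0 = 0 ∧ ∀ n : ℕ, (T x) (n + 1) = (ω n : ℂ) * x n)
    (hc : liminf (fun n : ℕ => (∏ i ∈ Finset.range n, ω i) ^ ((1 : ℝ) / n)) atTop = 0)
    (K : NNReal) : ¬ AntilipschitzWith K T := by
  intro hK
  have hgrowth : ∀ n, 1 ≤ ((K : ℝ) + 1) ^ n * ∏ i ∈ Finset.range n, ω i := by
    intro n
    induction n with
    | zero => simp
    | succ n ih =>
      have hstep := hK.le_mul_norm (map_zero T) (scaledBasis p ω n)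
      rw [apply_scaledBasis hT, norm_scaledBasis hω, norm_scaledBasis hω] at hstep
      have hP : 0 ≤ ∏ i ∈ Finset.range (n + 1), ω i := Finset.prod_nonneg fun i _ => hω i
      calc 1 ≤ ((K : ℝ) + 1) ^ n * ∏ i ∈ Finset.range n, ω i := ih
        _ ≤ ((K : ℝ) + 1) ^ n * ((K + 1) * ∏ i ∈ Finset.range (n + 1), ω i) := by
          gcongr
          exact hstep.trans (by gcongr; linarith)
        _ = ((K : ℝ) + 1) ^ (n + 1) * ∏ i ∈ Finset.range (n + 1), ω i := by ring
  obtain ⟨n, hn⟩ := (frequently_prod_lt_mul_pow hω hωbdd hc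
    (inv_pos.mpr (by positivity : (0 : ℝ) < K + 1)) one_pos).exists
  have hKn : (0 : ℝ) < ((K : ℝ) + 1) ^ n := by positivity
  have hsmall := mul_lt_mul_of_pos_left hn hKn
  rw [one_mul, inv_pow, mul_inv_cancel₀ hKn.ne'] at hsmall
  linarith [hgrowth n]

theorem topologicalClosure_range_shiftOp_eq_top (hp : p ≠ ⊤) (hωpos : ∀ n, 0 < ω n)
    (hωbdd : ∃ C : ℝ, ∀ n, ω n ≤ C)
    (hT : ∀ x : lp (fun _ : ℕ => ℂ) p,
      (T x) 0 = 0 ∧ ∀ n : ℕ, (T x) (n + 1) = (ω n : ℂ) * x n)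
    (hc : liminf (fun n : ℕ => (∏ i ∈ Finset.range n, ω i) ^ ((1 : ℝ) / n)) atTop = 0)
    {l : ℂ} (hl : l ≠ 0) : (shiftOp T l).range.topologicalClosure = ⊤ := by
  set M := (shiftOp T l).range.topologicalClosure
  have hP : ∀ n, 0 < ∏ i ∈ Finset.range n, ω i := fun n => Finset.prod_pos fun i _ => hωpos i
  have hbasis : ∀ k, scaledBasis p ω k ∈ M := by
    intro k
    rw [← SetLike.mem_coe, Submodule.topologicalClosure_coe, Metric.mem_closure_iff]
    intro ε hε
    obtain ⟨n, hn, hkn⟩ := ((frequently_prod_lt_mul_pow (fun n => (hωpos n).le) hωbdd hc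
      (norm_pos_iff.mpr hl) (by positivity : 0 < ε / ‖l‖ ^ k)).and_eventually
      (eventually_ge_atTop k)).exists
    obtain ⟨N, rfl⟩ := Nat.exists_eq_add_of_le hkn
    refine ⟨_, sub_inv_pow_smul_mem_range_shiftOp (apply_scaledBasis hT) hl k N, ?_⟩
    rw [dist_self_sub_right, norm_smul, norm_pow, norm_inv,
      norm_scaledBasis (fun n => (hωpos n).le)]
    calc ‖l‖⁻¹ ^ N * ∏ i ∈ Finset.range (k + N), ω i
        < ‖l‖⁻¹ ^ N * (ε / ‖l‖ ^ k * ‖l‖ ^ (k + N)) := by gcongr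
      _ = ε := by rw [pow_add, inv_pow]; field_simp
  have hsingle : ∀ k c, lp.single p k c ∈ M := by
    intro k c
    have : lp.single p k c = (c / (∏ i ∈ Finset.range k, ω i : ℝ)) • scaledBasis p ω k := by
      rw [scaledBasis, ← lp.single_smul, smul_eq_mul,
        div_mul_cancel₀ _ (by exact_mod_cast (hP k).ne')]
    exact this ▸ M.smul_mem _ (hbasis k)
  refine eq_top_iff.mpr fun x _ => (shiftOp T l).range.isClosed_topologicalClosure.mem_of_tendsto
    (lp.hasSum_single hp x) (Eventually.of_forall fun s => M.sum_mem fun k _ => hsingle k (x k))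

end WeightedShift

theorem mem_descentSpectrum_iff_not_surjective {T : X →L[ℂ] X} {l : ℂ}
    (hinj : Function.Injective (shiftOp T l)) :
    l ∈ descentSpectrum T ↔ ¬ Function.Surjective (shiftOp T l) := by
  simp only [descentSpectrum, Set.mem_ofPred_eq, ContinuousLinearMap.toLinearMap_pow, ne_eq,
    Module.End.range_pow_eq_range_pow_succ_iff_surjective hinj, forall_const]
  rfl

theorem mem_essDescentSpectrum_iff_not_finiteDimensional {T : X →L[ℂ] X} {l : ℂ}
    (hinj : Function.Injective (shiftOp T l)) :
    l ∈ essDescentSpectrum T ↔ ¬ FiniteDimensional ℂ (X ⧸ (shiftOp T l).range) := by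
  have h (n : ℕ) : FiniteDimensional ℂ (rangeQuot (shiftOp T l) n) ↔
      FiniteDimensional ℂ (X ⧸ (shiftOp T l).range) := by
    unfold rangeQuot
    rw [ContinuousLinearMap.toLinearMap_pow, ContinuousLinearMap.toLinearMap_pow]
    exact Module.Finite.equiv_iff (Module.End.quotientRangePowEquiv hinj n)
  simp only [essDescentSpectrum, Set.mem_ofPred_eq, h, forall_const]

open Filter in
/-- Let `T` be a unilateral weighted right shift on `ℓ^p(ℕ)`,
`1 ≤ p < ∞`, with bounded positive weight sequence `(ω_n)`, i.e.
`T(x₁, x₂, …) = (0, ω₁x₁, ω₂x₂, …)`. If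
`c(T) = liminf_n (ω₁⋯ω_n)^{1/n} = 0`, then `σ_desc(T) = σ_desc^e(T)`. -/
theorem weightedShift_descentSpectrum_eq_essDescentSpectrum
    (p : ENNReal) [Fact (1 ≤ p)] (hp : p ≠ ⊤)
    (ω : ℕ → ℝ) (hωpos : ∀ n, 0 < ω n) (hωbdd : ∃ C : ℝ, ∀ n, ω n ≤ C)
    (T : lp (fun _ : ℕ => ℂ) p →L[ℂ] lp (fun _ : ℕ => ℂ) p)
    (hT : ∀ x : lp (fun _ : ℕ => ℂ) p,
      (T x) 0 = 0 ∧ ∀ n : ℕ, (T x) (n + 1) = (ω n : ℂ) * x n)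
    (hc : liminf (fun n : ℕ => (∏ i ∈ Finset.range n, ω i) ^ ((1 : ℝ) / n)) atTop = 0) :
    descentSpectrum T = essDescentSpectrum T := by
  ext l
  have hinj := WeightedShift.injective_shiftOp (fun n => (hωpos n).ne') hT l
  rw [mem_descentSpectrum_iff_not_surjective hinj,
    mem_essDescentSpectrum_iff_not_finiteDimensional hinj, not_iff_not]
  refine ⟨fun hsurj => ?_, fun hfin => ?_⟩
  · rw [LinearMap.range_eq_top.mpr hsurj]
    infer_instance
  · obtain ⟨K, hK⟩ :=
      (shiftOp T l).exists_antilipschitzWith_of_finiteDimensional_quotient_range hinj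
    have hl : l ≠ 0 := by
      rintro rfl
      exact WeightedShift.not_antilipschitzWith (fun n => (hωpos n).le) hωbdd hT hc K
        (by simpa [shiftOp] using hK)
    exact ((shiftOp T l).bijective_iff_dense_range_and_antilipschitz.mpr
      ⟨WeightedShift.topologicalClosure_range_shiftOp_eq_top hp hωpos hωbdd hT hc hl, K, hK⟩).2
end
end

section
/- Let X be a complex Banach space and T a bounded linear operator on X. If T is semi-regular (R(T) is closed and N(Tⁿ) ⊆ R(T) for all n ∈ ℕ) and the adjoint T* has the single-valued extension property at 0, then T has finite descent. -/
noncomputable section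

variable {X : Type*} [NormedAddCommGroup X] [NormedSpace ℂ X]

/-- An operator `A` on a complex normed space `Y` has the single-valued extension
property at `l₀`: for every open neighbourhood `U` of `l₀`, the only analytic function
`f : U → Y` with `(A - λ)f(λ) = 0` on `U` is the zero function. -/
def HasSVEPAt {Y : Type*} [NormedAddCommGroup Y] [NormedSpace ℂ Y]
    (A : Y →L[ℂ] Y) (l₀ : ℂ) : Prop :=
  ∀ U : Set ℂ, IsOpen U → l₀ ∈ U → ∀ f : ℂ → Y, AnalyticOnNhd ℂ f U →
    (∀ l ∈ U, A (f l) - l • f l = 0) → ∀ l ∈ U, f l = 0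

/-- The adjoint (dual) operator `T*` on the dual space `X* = X →L[ℂ] ℂ`,
given by `T* g = g ∘ T`. -/
def dualOp (T : X →L[ℂ] X) : StrongDual ℂ X →L[ℂ] StrongDual ℂ X :=
  (ContinuousLinearMap.compSL X X ℂ (RingHom.id ℂ) (RingHom.id ℂ)).flip T

/-- If `N(Tᵐ) ⊆ R(T)` for every `m`, then `N(Tᵐ) ⊆ R(Tⁿ)` for all `m, n`. -/
lemma aux_ker_pow_le_range_pow {X : Type*} [NormedAddCommGroup X] [NormedSpace ℂ X]
    (T : X →L[ℂ] X)
    (hker : ∀ n : ℕ, (LinearMap.ker ((T ^ n : X →L[ℂ] X) : X →ₗ[ℂ] X) : Submodule ℂ X) ≤ LinearMap.range (T : X →ₗ[ℂ] X))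
    (m n : ℕ) : (LinearMap.ker ((T ^ m : X →L[ℂ] X) : X →ₗ[ℂ] X) : Submodule ℂ X) ≤ LinearMap.range ((T ^ n : X →L[ℂ] X) : X →ₗ[ℂ] X) := by
  induction n with
  | zero =>
    intro x _
    exact ⟨x, by simp⟩
  | succ n ih =>
    intro x hx
    obtain ⟨y, hy⟩ := ih hx
    change (T ^ n) y = x at hy
    have hxm : (T ^ m) x = 0 := hx
    have hym : y ∈ LinearMap.ker ((T ^ (m + n) : X →L[ℂ] X) : X →ₗ[ℂ] X) := by
      have h1 : (T ^ (m + n)) y = (T ^ m) ((T ^ n) y) := by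
        rw [pow_add]; rfl
      show (T ^ (m + n)) y = 0
      rw [h1, hy, hxm]
    obtain ⟨z, hz⟩ := hker (m + n) hym
    change T z = y at hz
    refine ⟨z, ?_⟩
    show (T ^ (n + 1)) z = x
    have : (T ^ (n + 1)) z = (T ^ n) (T z) := by rw [pow_succ]; rfl
    rw [this, hz, hy]

set_option maxHeartbeats 2000000 in
set_option synthInstance.maxHeartbeats 400000 in
/-- If `T` is semi-regular (`R(T)` is closed and `N(Tⁿ) ⊆ R(T)` for
all `n`) and the adjoint `T*` has the single-valued extension property at `0`, then `T`
has finite descent. -/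
theorem finite_descent_of_semiRegular_of_dual_svep_at_zero
    {X : Type*} [NormedAddCommGroup X] [NormedSpace ℂ X] [CompleteSpace X]
    (T : X →L[ℂ] X)
    (hclosed : IsClosed (LinearMap.range (T : X →ₗ[ℂ] X) : Set X))
    (hker : ∀ n : ℕ, (LinearMap.ker ((T ^ n : X →L[ℂ] X) : X →ₗ[ℂ] X) : Submodule ℂ X) ≤ LinearMap.range (T : X →ₗ[ℂ] X))
    (hsvep : HasSVEPAt (dualOp T) 0) :
    ∃ q : ℕ, LinearMap.range ((T ^ q : X →L[ℂ] X) : X →ₗ[ℂ] X) =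
      LinearMap.range ((T ^ (q + 1) : X →L[ℂ] X) : X →ₗ[ℂ] X) := by
  suffices hsurj : LinearMap.range (T : X →ₗ[ℂ] X) = ⊤ by
    refine ⟨0, ?_⟩
    have h0 : LinearMap.range ((T ^ 0 : X →L[ℂ] X) : X →ₗ[ℂ] X) = ⊤ := by
      rw [pow_zero]
      exact LinearMap.range_eq_top.mpr fun x => ⟨x, rfl⟩
    have h1 : LinearMap.range ((T ^ (0 + 1) : X →L[ℂ] X) : X →ₗ[ℂ] X) = ⊤ := by
      rw [zero_add, pow_one]; exact hsurj
    rw [h0, h1]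
  by_contra hne
  set p : Submodule ℂ X := LinearMap.range (T : X →ₗ[ℂ] X) with hp
  haveI hpc : IsClosed (p : Set X) := hclosed
  -- a point outside the range
  obtain ⟨x₀, hx₀⟩ : ∃ x : X, x ∉ p := by
    by_contra h
    push_neg at h
    exact hne (Submodule.eq_top_iff'.mpr h)
  -- construct a nonzero functional `g₀` vanishing on `R(T)`
  let π : X →L[ℂ] (X ⧸ p) := p.mkQ.mkContinuous 1
    (fun x => by simpa using Submodule.Quotient.norm_mk_le p x)
  have hπ : ∀ x : X, π x = Submodule.Quotient.mk x := fun x => rfl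
  have hx0q : (Submodule.Quotient.mk x₀ : X ⧸ p) ≠ 0 := by
    simpa [Submodule.Quotient.mk_eq_zero] using hx₀
  obtain ⟨gq, hgq1, hgqx⟩ := exists_dual_vector ℂ (Submodule.Quotient.mk x₀ : X ⧸ p) (norm_ne_zero_iff.mpr hx0q)
  set g₀ : X →L[ℂ] ℂ := gq.comp π with hg₀
  have hg₀T : ∀ x : X, g₀ (T x) = 0 := by
    intro x
    have hmem : T x ∈ p := ⟨x, rfl⟩
    have : π (T x) = 0 := by
      rw [hπ, Submodule.Quotient.mk_eq_zero]
      exact hmem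
    simp [hg₀, ContinuousLinearMap.comp_apply, this]
  have hg₀ne : g₀ ≠ 0 := by
    intro h
    have h1 : g₀ x₀ = 0 := by rw [h]; rfl
    have h2 : g₀ x₀ = (‖(Submodule.Quotient.mk x₀ : X ⧸ p)‖ : ℂ) := by
      rw [hg₀, ContinuousLinearMap.comp_apply, hπ, hgqx]
      rfl
    rw [h1] at h2
    have : ‖(Submodule.Quotient.mk x₀ : X ⧸ p)‖ = 0 := by exact_mod_cast h2.symm
    exact hx0q (norm_eq_zero.mp this)
  -- open mapping constant
  haveI : CompleteSpace p := hclosed.completeSpace_coe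
  let Tr : X →L[ℂ] p := T.codRestrict p fun x => ⟨x, rfl⟩
  have hTrs : Function.Surjective Tr := by
    rintro ⟨y, x, hx⟩
    exact ⟨x, Subtype.ext hx⟩
  obtain ⟨C, hC, hCp⟩ := Tr.exists_preimage_norm_le hTrs
  choose pre hpre1 hpre2 using hCp
  have hTpre : ∀ y : p, T (pre y) = (y : X) := fun y => congrArg Subtype.val (hpre1 y)
  have hnormy : ∀ y : p, ‖y‖ = ‖(y : X)‖ := fun y => rfl
  -- the key extension step
  have key : ∀ (n : ℕ) (h : X →L[ℂ] ℂ), (∀ x, h ((T ^ n) x) = g₀ x) →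
      ∃ h' : X →L[ℂ] ℂ, (∀ x, h' (T x) = h x) ∧ ‖h'‖ ≤ C * ‖h‖ := by
    intro n h hh
    have hker0 : ∀ x, T x = 0 → h x = 0 := by
      intro x hx
      have hxmem : x ∈ LinearMap.ker ((T ^ 1 : X →L[ℂ] X) : X →ₗ[ℂ] X) := by
        show (T ^ 1) x = 0
        rw [pow_one]; exact hx
      obtain ⟨z, hz⟩ := aux_ker_pow_le_range_pow T hker 1 (n + 1) hxmem
      change (T ^ (n + 1)) z = x at hz
      have h1 : (T ^ (n + 1)) z = (T ^ n) (T z) := by rw [pow_succ]; rfl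
      calc h x = h ((T ^ n) (T z)) := by rw [← h1, hz]
        _ = g₀ (T z) := hh _
        _ = 0 := hg₀T _
    have hker2 : ∀ a b : X, T a = T b → h a = h b := by
      intro a b hab
      have : h (a - b) = 0 := hker0 _ (by rw [map_sub, hab, sub_self])
      rw [map_sub] at this
      exact sub_eq_zero.mp this
    -- build the functional on the range of `T`
    let φ : p →ₗ[ℂ] ℂ :=
      { toFun := fun y => h (pre y)
        map_add' := by
          intro y z
          have hT : T (pre (y + z)) = T (pre y + pre z) := by
            rw [map_add, hTpre, hTpre, hTpre, Submodule.coe_add]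
          show h (pre (y + z)) = h (pre y) + h (pre z)
          rw [hker2 _ _ hT, map_add]
        map_smul' := by
          intro c y
          have hT : T (pre (c • y)) = T (c • pre y) := by
            rw [map_smul, hTpre, hTpre, Submodule.coe_smul]
          show h (pre (c • y)) = c • h (pre y)
          rw [hker2 _ _ hT, map_smul] }
    have hφbound : ∀ y : p, ‖φ y‖ ≤ (C * ‖h‖) * ‖y‖ := by
      intro y
      calc ‖φ y‖ = ‖h (pre y)‖ := rfl
        _ ≤ ‖h‖ * ‖pre y‖ := h.le_opNorm _
        _ ≤ ‖h‖ * (C * ‖y‖) := by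
            exact mul_le_mul_of_nonneg_left (hpre2 y) (norm_nonneg h)
        _ = (C * ‖h‖) * ‖y‖ := by ring
    let φc : p →L[ℂ] ℂ := φ.mkContinuous (C * ‖h‖) hφbound
    obtain ⟨h', hh'ext, hh'norm⟩ := exists_extension_norm_eq p φc
    refine ⟨h', ?_, ?_⟩
    · intro x
      have hmem : T x ∈ p := ⟨x, rfl⟩
      have h1 : h' (T x) = φc ⟨T x, hmem⟩ := hh'ext ⟨T x, hmem⟩
      have h2 : φc (⟨T x, hmem⟩ : p) = h (pre ⟨T x, hmem⟩) := rfl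
      rw [h1, h2]
      exact hker2 _ _ (by rw [hTpre])
    · rw [hh'norm]
      exact φ.mkContinuous_norm_le (by positivity) hφbound
  -- the recursively defined sequence of functionals
  let gs : ∀ n : ℕ, {h : X →L[ℂ] ℂ // ∀ x, h ((T ^ n) x) = g₀ x} := fun n =>
    Nat.rec ⟨g₀, fun x => by rw [pow_zero]; rfl⟩
      (fun n ih => ⟨(key n ih.1 ih.2).choose, by
        intro x
        have h1 : (T ^ (n + 1)) x = T ((T ^ n) x) := by rw [pow_succ']; rfl
        rw [h1, (key n ih.1 ih.2).choose_spec.1, ih.2]⟩) n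
  let g : ℕ → (X →L[ℂ] ℂ) := fun n => (gs n).1
  have hg0 : g 0 = g₀ := rfl
  have hgsucc : ∀ n, (∀ x, g (n + 1) (T x) = g n x) ∧ ‖g (n + 1)‖ ≤ C * ‖g n‖ :=
    fun n => (key n (gs n).1 (gs n).2).choose_spec
  have hgbound : ∀ n, ‖g n‖ ≤ C ^ n * ‖g₀‖ := by
    intro n
    induction n with
    | zero => simp [hg0]
    | succ n ih =>
      calc ‖g (n + 1)‖ ≤ C * ‖g n‖ := (hgsucc n).2
        _ ≤ C * (C ^ n * ‖g₀‖) := mul_le_mul_of_nonneg_left ih hC.le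
        _ = C ^ (n + 1) * ‖g₀‖ := by ring
  -- the power series
  let q : FormalMultilinearSeries ℂ ℂ (X →L[ℂ] ℂ) := fun n =>
    ContinuousMultilinearMap.mkPiRing ℂ (Fin n) (g n)
  have h2C : (0 : ℝ) < (2 * C)⁻¹ := by positivity
  let rn : NNReal := ⟨(2 * C)⁻¹, h2C.le⟩
  have hrad : (rn : ENNReal) ≤ q.radius := by
    apply q.le_radius_of_bound ‖g₀‖
    intro n
    have hq : ‖q n‖ = ‖g n‖ := ContinuousMultilinearMap.norm_mkPiRing (g n)
    have hrn : (rn : ℝ) = (2 * C)⁻¹ := rfl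
    rw [hq, hrn]
    calc ‖g n‖ * ((2 * C)⁻¹) ^ n ≤ (C ^ n * ‖g₀‖) * ((2 * C)⁻¹) ^ n := by
          exact mul_le_mul_of_nonneg_right (hgbound n) (by positivity)
      _ = ‖g₀‖ * (C * (2 * C)⁻¹) ^ n := by rw [mul_pow]; ring
      _ = ‖g₀‖ * (2⁻¹ : ℝ) ^ n := by
          have hCC : C * (2 * C)⁻¹ = 2⁻¹ := by
            rw [mul_inv, mul_comm (2 : ℝ)⁻¹ C⁻¹, ← mul_assoc, mul_inv_cancel₀ hC.ne', one_mul]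
          rw [hCC]
      _ ≤ ‖g₀‖ * 1 := by
          refine mul_le_mul_of_nonneg_left ?_ (norm_nonneg _)
          exact pow_le_one₀ (by norm_num) (by norm_num)
      _ = ‖g₀‖ := mul_one _
  have hrnpos : (0 : ENNReal) < rn := by
    exact_mod_cast (show (0 : NNReal) < rn from by exact_mod_cast h2C)
  have hradpos : 0 < q.radius := lt_of_lt_of_le hrnpos hrad
  have hFP : HasFPowerSeriesOnBall q.sum q 0 q.radius := q.hasFPowerSeriesOnBall hradpos
  set U : Set ℂ := Metric.ball 0 ((2 * C)⁻¹) with hU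
  have hUopen : IsOpen U := Metric.isOpen_ball
  have hU0 : (0 : ℂ) ∈ U := by
    rw [hU, Metric.mem_ball, dist_zero_right]
    simpa using h2C
  have hUnorm : ∀ l ∈ U, ‖l‖ < (2 * C)⁻¹ := by
    intro l hl
    rw [hU, Metric.mem_ball, dist_zero_right] at hl
    exact hl
  have hanalytic : AnalyticOnNhd ℂ q.sum U := by
    intro l hl
    refine hFP.analyticOnNhd l ?_
    refine lt_of_lt_of_le ?_ hrad
    have h1 : ‖l‖₊ < rn := by
      rw [← NNReal.coe_lt_coe, coe_nnnorm]
      exact hUnorm l hl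
    have h2 : edist l 0 = (‖l‖₊ : ENNReal) := edist_zero_right l
    show edist l 0 < (rn : ENNReal)
    rw [h2]
    exact_mod_cast h1
  -- summability and the sum formula
  have hsum1 : ∀ l : ℂ, ‖l‖ < (2 * C)⁻¹ → Summable (fun n => l ^ n • g n) := by
    intro l hl
    apply Summable.of_norm_bounded (g := fun n => (‖l‖ * C) ^ n * ‖g₀‖)
    · apply Summable.mul_right
      apply summable_geometric_of_lt_one (by positivity)
      calc ‖l‖ * C < (2 * C)⁻¹ * C := by
            exact mul_lt_mul_of_pos_right hl hC
        _ = 2⁻¹ := by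
            rw [mul_comm, mul_inv, mul_comm (2 : ℝ)⁻¹ C⁻¹, ← mul_assoc,
              mul_inv_cancel₀ hC.ne', one_mul]
        _ < 1 := by norm_num
    · intro n
      show ‖l ^ n • g n‖ ≤ (‖l‖ * C) ^ n * ‖g₀‖
      rw [norm_smul (l ^ n) (g n), norm_pow, mul_pow]
      calc ‖l‖ ^ n * ‖g n‖ ≤ ‖l‖ ^ n * (C ^ n * ‖g₀‖) := by
            exact mul_le_mul_of_nonneg_left (hgbound n) (by positivity)
        _ = ‖l‖ ^ n * C ^ n * ‖g₀‖ := by ring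
  have hqsum : ∀ l : ℂ, q.sum l = ∑' n, l ^ n • g n := by
    intro l
    apply tsum_congr
    intro n
    show (ContinuousMultilinearMap.mkPiRing ℂ (Fin n) (g n)) (fun _ => l) = l ^ n • g n
    rw [ContinuousMultilinearMap.mkPiRing_apply]
    congr 1
    simp
  have hdual : ∀ h : X →L[ℂ] ℂ, dualOp T h = h.comp T := fun h => rfl
  have hcomp0 : (g 0).comp T = 0 := ContinuousLinearMap.ext fun x => hg₀T x
  have hcompsucc : ∀ n, (g (n + 1)).comp T = g n :=
    fun n => ContinuousLinearMap.ext fun x => (hgsucc n).1 x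
  have heq : ∀ l ∈ U, dualOp T (q.sum l) - l • q.sum l = 0 := by
    intro l hl
    have hlr := hUnorm l hl
    have hS : Summable (fun n => l ^ n • g n) := hsum1 l hlr
    rw [hqsum]
    have hmap : dualOp T (∑' n, l ^ n • g n) = ∑' n, l ^ n • (g n).comp T := by
      rw [ContinuousLinearMap.map_tsum _ hS]
      apply tsum_congr
      intro n
      rw [map_smul, hdual]
    have hS2 : Summable (fun n => l ^ n • (g n).comp T) := by
      have : (fun n => l ^ n • (g n).comp T) = fun n => dualOp T (l ^ n • g n) := by
        funext n
        rw [map_smul, hdual]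
      rw [this]
      exact hS.map (dualOp T) (dualOp T).continuous
    have hshift : ∑' n, l ^ n • (g n).comp T = l • ∑' n, l ^ n • g n := by
      rw [hS2.tsum_eq_zero_add]
      have hzterm : l ^ 0 • (g 0).comp T = 0 := by
        ext x
        show l ^ 0 • (((g 0).comp T) x) = (0 : X →L[ℂ] ℂ) x
        have h0 : ((g 0).comp T) x = 0 := hg₀T x
        rw [h0, smul_zero]
        rfl
      rw [hzterm, zero_add]
      have h1 : (fun n => l ^ (n + 1) • (g (n + 1)).comp T) = fun n => l • (l ^ n • g n) := by
        funext n
        rw [hcompsucc, pow_succ', mul_smul]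
      rw [h1, hS.tsum_const_smul l]
    rw [hmap, hshift, sub_self]
  -- apply SVEP
  have hzero : q.sum 0 = 0 := hsvep U hUopen hU0 q.sum hanalytic heq 0 hU0
  have hsum0 : q.sum 0 = g₀ := by
    rw [hqsum]
    rw [tsum_eq_single 0]
    · rw [pow_zero, one_smul, hg0]
    · intro n hn
      show (0 : ℂ) ^ n • g n = 0
      rw [zero_pow hn]
      ext x
      show (0 : ℂ) • ((g n) x) = (0 : X →L[ℂ] ℂ) x
      rw [zero_smul]
      rfl
  rw [hsum0] at hzero
  exact hg₀ne hzero
end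
end
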